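/- arXiv:2209.14516 — 11 statements merged into one kernel-verified Lean document; each statement's English description precedes it below -/
import Mathlib

section
/- Let M1 = (E,𝓘1) and M2 = (E,𝓘2) be matroids on a common finite ground set E, with rank functions r1 and r2. Then the maximum cardinality of a common independent set of M1 and M2 equals the minimum of r1(Z) + r2(E\Z) over all subsets Z ⊆ E; that is, max{|I| : I ∈ 𝓘1∩𝓘2} = min{r1(Z) + r2(E\Z) : Z ⊆ E}. -/
open Classical Finset

structure FinMatroid (α : Type) : Type where
  Indep : Finset α → Prop
  empty_indep : Indep ∅
  subset_indep : ∀ ⦃I J : Finset α⦄, Indep J → I ⊆ J → Indep I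
  exchange : ∀ ⦃I J : Finset α⦄, Indep I → Indep J → I.card < J.card →
    ∃ x ∈ J \ I, Indep (insert x I)

noncomputable def FinMatroid.rank {α : Type} (M : FinMatroid α) (X : Finset α) : ℕ :=
  (X.powerset.filter (fun Y => M.Indep Y)).sup Finset.card

namespace FinMatroid

variable {α : Type} (M : FinMatroid α)

lemma card_le_rank {I X : Finset α} (hI : M.Indep I) (hIX : I ⊆ X) :
    I.card ≤ M.rank X :=
  Finset.le_sup (by simp [Finset.mem_filter, Finset.mem_powerset, hIX, hI])

lemma rank_empty : M.rank ∅ = 0 := by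
  simp [rank, Finset.powerset_empty, Finset.filter_singleton, M.empty_indep]

lemma exists_rank_set (X : Finset α) :
    ∃ B, B ⊆ X ∧ M.Indep B ∧ B.card = M.rank X := by
  have hne : (X.powerset.filter (fun Y => M.Indep Y)).Nonempty :=
    ⟨∅, by simp [Finset.mem_filter, M.empty_indep]⟩
  obtain ⟨B, hB, hBc⟩ := Finset.exists_mem_eq_sup _ hne Finset.card
  simp only [Finset.mem_filter, Finset.mem_powerset] at hB
  exact ⟨B, hB.1, hB.2, hBc.symm⟩

lemma rank_mono {X Y : Finset α} (h : X ⊆ Y) : M.rank X ≤ M.rank Y := by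
  apply Finset.sup_le
  intro B hB
  simp only [Finset.mem_filter, Finset.mem_powerset] at hB
  exact M.card_le_rank hB.2 (hB.1.trans h)

lemma exists_basis_superset {I X : Finset α} (hI : M.Indep I) (hIX : I ⊆ X) :
    ∃ B, I ⊆ B ∧ B ⊆ X ∧ M.Indep B ∧ B.card = M.rank X := by
  have key : ∀ (n : ℕ) (I : Finset α), M.Indep I → I ⊆ X → M.rank X - I.card ≤ n →
      ∃ B, I ⊆ B ∧ B ⊆ X ∧ M.Indep B ∧ B.card = M.rank X := by
    intro n
    induction n with
    | zero =>
      intro I hI hIX hle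
      have h1 : I.card ≤ M.rank X := M.card_le_rank hI hIX
      exact ⟨I, Finset.Subset.refl I, hIX, hI, by omega⟩
    | succ n ih =>
      intro I hI hIX hle
      by_cases hcard : I.card = M.rank X
      · exact ⟨I, Finset.Subset.refl I, hIX, hI, hcard⟩
      · have h1 : I.card < M.rank X := lt_of_le_of_ne (M.card_le_rank hI hIX) hcard
        obtain ⟨J, hJX, hJind, hJcard⟩ := M.exists_rank_set X
        obtain ⟨x, hx, hxind⟩ := M.exchange hI hJind (by omega)
        simp only [Finset.mem_sdiff] at hx
        have hxX : x ∈ X := hJX hx.1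
        have hcard' : (insert x I).card = I.card + 1 :=
          Finset.card_insert_of_notMem hx.2
        obtain ⟨B, hB1, hB2, hB3, hB4⟩ := ih (insert x I) hxind
          (Finset.insert_subset hxX hIX) (by omega)
        exact ⟨B, (Finset.subset_insert x I).trans hB1, hB2, hB3, hB4⟩
  exact key (M.rank X) I hI hIX (by omega)

lemma rank_submodular (A B : Finset α) :
    M.rank (A ∪ B) + M.rank (A ∩ B) ≤ M.rank A + M.rank B := by
  obtain ⟨C, hCsub, hCind, hCcard⟩ := M.exists_rank_set (A ∩ B)
  obtain ⟨D, hCD, hDsub, hDind, hDcard⟩ :=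
    M.exists_basis_superset hCind (hCsub.trans Finset.inter_subset_union)
  have hDA : (D ∩ A).card ≤ M.rank A :=
    M.card_le_rank (M.subset_indep hDind Finset.inter_subset_left)
      Finset.inter_subset_right
  have hDB : (D ∩ B).card ≤ M.rank B :=
    M.card_le_rank (M.subset_indep hDind Finset.inter_subset_left)
      Finset.inter_subset_right
  have hkey : (D ∩ A).card + (D ∩ B).card = D.card + (D ∩ (A ∩ B)).card := by
    have h1 : (D ∩ A) ∪ (D ∩ B) = D := by
      rw [← Finset.inter_union_distrib_left]
      exact Finset.inter_eq_left.mpr hDsub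
    have h2 : (D ∩ A) ∩ (D ∩ B) = D ∩ (A ∩ B) := by
      ext x; simp only [Finset.mem_inter]; tauto
    have := Finset.card_union_add_card_inter (D ∩ A) (D ∩ B)
    rw [h1, h2] at this
    omega
  have hC : C.card ≤ (D ∩ (A ∩ B)).card :=
    Finset.card_le_card (Finset.subset_inter hCD hCsub)
  omega

lemma rank_insert_loop {e : α} (he : ¬ M.Indep {e}) (X : Finset α) :
    M.rank (insert e X) = M.rank X := by
  refine le_antisymm ?_ (M.rank_mono (Finset.subset_insert e X))
  apply Finset.sup_le
  intro B hB
  simp only [Finset.mem_filter, Finset.mem_powerset] at hB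
  have heB : e ∉ B := fun h =>
    he (M.subset_indep hB.2 (Finset.singleton_subset_iff.mpr h))
  exact M.card_le_rank hB.2 fun x hx => by
    rcases Finset.mem_insert.mp (hB.1 hx) with h | h
    · exact absurd (h ▸ hx) heB
    · exact h

def contract (M : FinMatroid α) (e : α) (he : M.Indep {e}) : FinMatroid α where
  Indep I := e ∉ I ∧ M.Indep (insert e I)
  empty_indep := ⟨Finset.notMem_empty e, by simpa using he⟩
  subset_indep := by
    intro I J hJ hIJ
    exact ⟨fun h => hJ.1 (hIJ h),
      M.subset_indep hJ.2 (Finset.insert_subset_insert e hIJ)⟩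
  exchange := by
    intro I J hI hJ hlt
    obtain ⟨x, hx, hxind⟩ := M.exchange hI.2 hJ.2 (by
      rw [Finset.card_insert_of_notMem hI.1, Finset.card_insert_of_notMem hJ.1]
      omega)
    simp only [Finset.mem_sdiff, Finset.mem_insert, not_or] at hx
    obtain ⟨hxJ, hxe, hxI⟩ := hx
    rcases hxJ with rfl | hxJ
    · exact absurd rfl hxe
    · refine ⟨x, Finset.mem_sdiff.mpr ⟨hxJ, hxI⟩, ?_, ?_⟩
      · simp only [Finset.mem_insert, not_or]
        exact ⟨fun h => hxe h.symm, hI.1⟩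
      · rwa [Finset.insert_comm]

lemma contract_rank (e : α) (he : M.Indep {e}) {X : Finset α} (heX : e ∉ X) :
    M.rank (insert e X) = (M.contract e he).rank X + 1 := by
  refine le_antisymm ?_ ?_
  · obtain ⟨B, heB, hBX, hBind, hBcard⟩ := M.exists_basis_superset he
      (Finset.singleton_subset_iff.mpr (Finset.mem_insert_self e X))
    have heB' : e ∈ B := heB (Finset.mem_singleton_self e)
    have h1 : (M.contract e he).Indep (B \ {e}) := by
      constructor
      · simp
      · rwa [Finset.insert_eq, Finset.union_sdiff_of_subset heB]
    have h2 : B \ {e} ⊆ X := by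
      intro x hx
      simp only [Finset.mem_sdiff, Finset.mem_singleton] at hx
      rcases Finset.mem_insert.mp (hBX hx.1) with h | h
      · exact absurd h hx.2
      · exact h
    have h3 : (B \ {e}).card = B.card - 1 := by
      rw [Finset.card_sdiff_of_subset (Finset.singleton_subset_iff.mpr heB'),
        Finset.card_singleton]
    have h4 := (M.contract e he).card_le_rank h1 h2
    have h5 : 1 ≤ B.card := Finset.card_pos.mpr ⟨e, heB'⟩
    omega
  · obtain ⟨C, hCX, hCind, hCcard⟩ := (M.contract e he).exists_rank_set X
    have h1 : M.Indep (insert e C) := hCind.2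
    have h2 : insert e C ⊆ insert e X := Finset.insert_subset_insert e hCX
    have h3 : (insert e C).card = C.card + 1 := Finset.card_insert_of_notMem hCind.1
    have := M.card_le_rank h1 h2
    omega

end FinMatroid

lemma exists_common {α : Type} : ∀ (n : ℕ) (M1 M2 : FinMatroid α) (E : Finset α),
    E.card ≤ n →
    ∀ k, (∀ Z ⊆ E, k ≤ M1.rank Z + M2.rank (E \ Z)) →
    ∃ I, I ⊆ E ∧ M1.Indep I ∧ M2.Indep I ∧ k ≤ I.card := by
  intro n
  induction n with
  | zero =>
    intro M1 M2 E hE k h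
    have hE0 : E = ∅ := Finset.card_eq_zero.mp (Nat.le_zero.mp hE)
    subst hE0
    have := h ∅ (Finset.Subset.refl _)
    simp only [Finset.sdiff_empty, FinMatroid.rank_empty] at this
    exact ⟨∅, Finset.Subset.refl _, M1.empty_indep, M2.empty_indep, by omega⟩
  | succ n ih =>
    intro M1 M2 E hE k h
    rcases E.eq_empty_or_nonempty with rfl | ⟨e, he⟩
    · have := h ∅ (Finset.Subset.refl _)
      simp only [Finset.sdiff_empty, FinMatroid.rank_empty] at this
      exact ⟨∅, Finset.Subset.refl _, M1.empty_indep, M2.empty_indep, by omega⟩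
    set E' := E \ {e} with hE'def
    have hE'sub : E' ⊆ E := Finset.sdiff_subset
    have hE'card : E'.card ≤ n := by
      rw [hE'def, Finset.card_sdiff_of_subset (Finset.singleton_subset_iff.mpr he),
        Finset.card_singleton]
      have : 1 ≤ E.card := Finset.card_pos.mpr ⟨e, he⟩
      omega
    have heE' : e ∉ E' := by simp [hE'def]
    by_cases hl1 : M1.Indep {e}
    case neg =>
      -- e is a loop in M1: delete it
      obtain ⟨I, hIE', hI1, hI2, hIc⟩ := ih M1 M2 E' hE'card k (by
        intro Z hZ
        have heZ : e ∉ Z := fun h' => heE' (hZ h')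
        have hsub : insert e Z ⊆ E :=
          Finset.insert_subset he (hZ.trans hE'sub)
        have := h (insert e Z) hsub
        rw [M1.rank_insert_loop hl1] at this
        have hid : E \ insert e Z = E' \ Z := by
          ext x
          simp only [Finset.mem_sdiff, Finset.mem_insert, not_or, hE'def,
            Finset.mem_singleton]
          tauto
        rwa [hid] at this)
      exact ⟨I, hIE'.trans hE'sub, hI1, hI2, hIc⟩
    by_cases hl2 : M2.Indep {e}
    case neg =>
      -- e is a loop in M2: delete it
      obtain ⟨I, hIE', hI1, hI2, hIc⟩ := ih M1 M2 E' hE'card k (by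
        intro Z hZ
        have heZ : e ∉ Z := fun h' => heE' (hZ h')
        have := h Z (hZ.trans hE'sub)
        have hid : E \ Z = insert e (E' \ Z) := by
          ext x
          simp only [Finset.mem_sdiff, Finset.mem_insert, hE'def,
            Finset.mem_singleton]
          constructor
          · rintro ⟨hx, hxZ⟩
            by_cases hxe : x = e
            · exact Or.inl hxe
            · exact Or.inr ⟨⟨hx, hxe⟩, hxZ⟩
          · rintro (rfl | ⟨⟨hx, _⟩, hxZ⟩)
            · exact ⟨he, heZ⟩
            · exact ⟨hx, hxZ⟩
        rw [hid, M2.rank_insert_loop hl2] at this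
        exact this)
      exact ⟨I, hIE'.trans hE'sub, hI1, hI2, hIc⟩
    -- e is not a loop in either matroid
    by_cases hdel : ∀ Z ⊆ E', k ≤ M1.rank Z + M2.rank (E' \ Z)
    · obtain ⟨I, hIE', hI1, hI2, hIc⟩ := ih M1 M2 E' hE'card k hdel
      exact ⟨I, hIE'.trans hE'sub, hI1, hI2, hIc⟩
    push_neg at hdel
    obtain ⟨Z1, hZ1E, hZ1⟩ := hdel
    set N1 := M1.contract e hl1 with hN1def
    set N2 := M2.contract e hl2 with hN2def
    by_cases hcon : ∀ Z ⊆ E', k - 1 ≤ N1.rank Z + N2.rank (E' \ Z)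
    · obtain ⟨I, hIE', hI1, hI2, hIc⟩ := ih N1 N2 E' hE'card (k - 1) hcon
      refine ⟨insert e I, Finset.insert_subset he (hIE'.trans hE'sub),
        hI1.2, hI2.2, ?_⟩
      rw [Finset.card_insert_of_notMem hI1.1]
      omega
    push_neg at hcon
    obtain ⟨Z2, hZ2E, hZ2⟩ := hcon
    exfalso
    have heZ1 : e ∉ Z1 := fun h' => heE' (hZ1E h')
    have heZ2 : e ∉ Z2 := fun h' => heE' (hZ2E h')
    have heZ2' : e ∉ E' \ Z2 := fun h' => heE' (Finset.mem_sdiff.mp h').1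
    have hr1 : M1.rank (insert e Z2) = N1.rank Z2 + 1 := M1.contract_rank e hl1 heZ2
    have hr2 : M2.rank (insert e (E' \ Z2)) = N2.rank (E' \ Z2) + 1 :=
      M2.contract_rank e hl2 heZ2'
    have hsub1 := M1.rank_submodular Z1 (insert e Z2)
    have hsub2 := M2.rank_submodular (E' \ Z1) (insert e (E' \ Z2))
    have hid1 : Z1 ∪ insert e Z2 = insert e (Z1 ∪ Z2) := by rw [Finset.union_insert]
    have hid2 : Z1 ∩ insert e Z2 = Z1 ∩ Z2 := by
      ext x
      simp only [Finset.mem_inter, Finset.mem_insert]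
      constructor
      · rintro ⟨hx1, rfl | hx2⟩
        · exact absurd hx1 heZ1
        · exact ⟨hx1, hx2⟩
      · rintro ⟨hx1, hx2⟩; exact ⟨hx1, Or.inr hx2⟩
    have hid3 : (E' \ Z1) ∪ insert e (E' \ Z2) = E \ (Z1 ∩ Z2) := by
      ext x
      simp only [Finset.mem_union, Finset.mem_insert, Finset.mem_sdiff, hE'def,
        Finset.mem_singleton, Finset.mem_inter]
      constructor
      · rintro (⟨⟨hx, _⟩, hxZ1⟩ | rfl | ⟨⟨hx, _⟩, hxZ2⟩)
        · exact ⟨hx, fun hh => hxZ1 hh.1⟩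
        · exact ⟨he, fun hh => heZ1 hh.1⟩
        · exact ⟨hx, fun hh => hxZ2 hh.2⟩
      · rintro ⟨hx, hxZ⟩
        by_cases hxe : x = e
        · exact Or.inr (Or.inl hxe)
        · by_cases hx1 : x ∈ Z1
          · exact Or.inr (Or.inr ⟨⟨hx, hxe⟩, fun h2 => hxZ ⟨hx1, h2⟩⟩)
          · exact Or.inl ⟨⟨hx, hxe⟩, hx1⟩
    have hid4 : (E' \ Z1) ∩ insert e (E' \ Z2) = E \ insert e (Z1 ∪ Z2) := by
      ext x
      simp only [Finset.mem_inter, Finset.mem_insert, Finset.mem_sdiff, hE'def,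
        Finset.mem_singleton, Finset.mem_union, not_or]
      constructor
      · rintro ⟨⟨⟨hx, hxe⟩, hxZ1⟩, rfl | ⟨⟨_, _⟩, hxZ2⟩⟩
        · exact absurd rfl hxe
        · exact ⟨hx, hxe, hxZ1, hxZ2⟩
      · rintro ⟨hx, hxe, hxZ1, hxZ2⟩
        exact ⟨⟨⟨hx, hxe⟩, hxZ1⟩, Or.inr ⟨⟨hx, hxe⟩, hxZ2⟩⟩
    rw [hid1, hid2] at hsub1
    rw [hid3, hid4] at hsub2
    have hk1 : k ≤ M1.rank (insert e (Z1 ∪ Z2)) + M2.rank (E \ insert e (Z1 ∪ Z2)) :=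
      h _ (Finset.insert_subset he ((Finset.union_subset hZ1E hZ2E).trans hE'sub))
    have hk2 : k ≤ M1.rank (Z1 ∩ Z2) + M2.rank (E \ (Z1 ∩ Z2)) :=
      h _ ((Finset.inter_subset_left).trans (hZ1E.trans hE'sub))
    omega

/-- **Edmonds' matroid intersection theorem.** The maximum cardinality of a common
independent set of two matroids `M1`, `M2` on a common finite ground set equals the
minimum of `r1(Z) + r2(E \ Z)` over all subsets `Z` of the ground set. -/
theorem stmt_0 {α : Type} [Fintype α] (M1 M2 : FinMatroid α) :
    ((Finset.univ : Finset (Finset α)).filter (fun I => M1.Indep I ∧ M2.Indep I)).sup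
        Finset.card
      = (Finset.univ : Finset (Finset α)).inf' Finset.univ_nonempty
          (fun Z => M1.rank Z + M2.rank (Finset.univ \ Z)) := by
  apply le_antisymm
  · apply Finset.sup_le
    intro I hI
    simp only [Finset.mem_filter, Finset.mem_univ, true_and] at hI
    apply Finset.le_inf'
    intro Z _
    have hsplit : (I ∩ Z).card + (I \ Z).card = I.card :=
      Finset.card_inter_add_card_sdiff I Z
    have h1 : (I ∩ Z).card ≤ M1.rank Z :=
      M1.card_le_rank (M1.subset_indep hI.1 Finset.inter_subset_left)
        Finset.inter_subset_right
    have h2 : (I \ Z).card ≤ M2.rank (Finset.univ \ Z) :=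
      M2.card_le_rank (M2.subset_indep hI.2 Finset.sdiff_subset)
        (Finset.sdiff_subset_sdiff (Finset.subset_univ I) (Finset.Subset.refl Z))
    omega
  · obtain ⟨I, _, hI1, hI2, hIc⟩ := exists_common (Finset.univ : Finset α).card M1 M2
      Finset.univ le_rfl
      ((Finset.univ : Finset (Finset α)).inf' Finset.univ_nonempty
        (fun Z => M1.rank Z + M2.rank (Finset.univ \ Z)))
      (fun Z _ =>
        Finset.inf'_le (fun Z => M1.rank Z + M2.rank (Finset.univ \ Z)) (Finset.mem_univ Z))
    exact le_trans hIc (Finset.le_sup (by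
      simp only [Finset.mem_filter, Finset.mem_univ, true_and]
      exact ⟨hI1, hI2⟩))
end

section
/- Let M = (E,𝓘) be a matroid, let I ∈ 𝓘, and let Z ⊆ E satisfy |I△Z| = |I| and I△Z ∈ 𝓘, where △ denotes symmetric difference. Then there exists a bijection φ : Z∩I → Z\I such that (I − y) + φ(y) ∈ 𝓘 for every y ∈ Z∩I. (Equivalently, the exchangeability arcs {(y,x) : x ∈ E\I, y ∈ I, I + x − y ∈ 𝓘} contain a perfect matching on Z.) -/
open Classical Finset

variable {α : Type}

/-- Augmentation: an independent set can be grown inside `A ∪ B` to size `B.card`. -/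
lemma FinMatroid.augment (M : FinMatroid α) :
    ∀ n (A B : Finset α), M.Indep A → M.Indep B → B.card = A.card + n →
    ∃ A', A ⊆ A' ∧ A' ⊆ A ∪ B ∧ A'.card = B.card ∧ M.Indep A' := by
  intro n
  induction n with
  | zero => intro A B hA hB h; exact ⟨A, Subset.rfl, subset_union_left, h.symm ▸ rfl, hA⟩
  | succ n ih =>
    intro A B hA hB h
    obtain ⟨x, hx, hxA⟩ := M.exchange hA hB (by omega)
    rw [mem_sdiff] at hx
    obtain ⟨A', h1, h2, h3, h4⟩ := ih (insert x A) B hxA hB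
      (by rw [card_insert_of_notMem hx.2]; omega)
    refine ⟨A', (subset_insert _ _).trans h1, h2.trans ?_, h3, h4⟩
    intro z hz
    rcases mem_union.mp hz with hz | hz
    · rcases mem_insert.mp hz with rfl | hz
      · exact mem_union_right _ hx.1
      · exact mem_union_left _ hz
    · exact mem_union_right _ hz

lemma FinMatroid.card_le_of_span (M : FinMatroid α) {B T K : Finset α}
    (hB : M.Indep B) (hK : M.Indep K) (hKsub : K ⊆ B ∪ T)
    (hT : ∀ x ∈ T, x ∉ B → ¬ M.Indep (insert x B)) : K.card ≤ B.card := by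
  by_contra h
  obtain ⟨x, hx, hxB⟩ := M.exchange hB hK (by omega)
  rw [mem_sdiff] at hx
  rcases mem_union.mp (hKsub hx.1) with h' | h'
  · exact hx.2 h'
  · exact hT x h' hx.2 hxB

/-- **Brualdi's lemma.** If `I` is independent, `|I △ Z| = |I|` and `I △ Z` is
independent, then the exchangeability arcs contain a perfect matching on `Z`:
there is a bijection `φ : Z ∩ I → Z \ I` with `I - y + φ(y)` independent for all
`y ∈ Z ∩ I`. -/
theorem stmt_1 {α : Type} [Fintype α] (M : FinMatroid α) (I Z : Finset α)
    (hI : M.Indep I)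
    (hcard : ((I \ Z) ∪ (Z \ I)).card = I.card)
    (hIZ : M.Indep ((I \ Z) ∪ (Z \ I))) :
    ∃ φ : {y : α // y ∈ Z ∩ I} → {x : α // x ∈ Z \ I},
      Function.Bijective φ ∧
      ∀ y : {y : α // y ∈ Z ∩ I}, M.Indep (insert (φ y : α) (I.erase (y : α))) := by
  classical
  -- basic cardinality facts
  have hdisj : Disjoint (I \ Z) (Z \ I) := disjoint_sdiff_sdiff
  have hcard' : (I \ Z).card + (Z \ I).card = I.card := by
    rw [← card_union_of_disjoint hdisj]; exact hcard
  have hIsplit : (I \ Z).card + (Z ∩ I).card = I.card := by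
    have : Z ∩ I ⊆ I := inter_subset_right
    have h2 : I \ Z = I \ (Z ∩ I) := by
      ext a; simp only [mem_sdiff, mem_inter]; tauto
    rw [h2, card_sdiff_add_card_eq_card this]
  have hZeq : (Z ∩ I).card = (Z \ I).card := by omega
  -- the neighborhood sets
  set t : {y : α // y ∈ Z ∩ I} → Finset α :=
    fun y => (Z \ I).filter (fun x => M.Indep (insert x (I.erase (y : α)))) with ht
  -- Hall's condition
  have hall : ∀ s : Finset {y : α // y ∈ Z ∩ I}, s.card ≤ (s.biUnion t).card := by
    intro s
    rcases s.eq_empty_or_nonempty with rfl | hs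
    · simp
    set S : Finset α := s.image Subtype.val with hS
    have hScard : S.card = s.card := card_image_of_injective _ Subtype.val_injective
    have hSsub : S ⊆ Z ∩ I := by
      intro a ha; obtain ⟨y, _, rfl⟩ := mem_image.mp ha; exact y.2
    have hSI : S ⊆ I := hSsub.trans inter_subset_right
    have hSZ : S ⊆ Z := hSsub.trans inter_subset_left
    have hSne : S.Nonempty := hs.image _
    set N : Finset α := s.biUnion t with hN
    have hNsub : N ⊆ Z \ I := by
      intro a ha; obtain ⟨y, _, hy⟩ := mem_biUnion.mp ha
      exact (mem_filter.mp hy).1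
    set T : Finset α := (Z \ I) \ N with hT'
    set B : Finset α := I \ S with hB
    have hBI : M.Indep B := M.subset_indep hI sdiff_subset
    -- key claim: elements of T are spanned by B
    have key : ∀ x ∈ T, x ∉ B → ¬ M.Indep (insert x B) := by
      intro x hxT hxB hind
      have hxZI : x ∈ Z \ I := (mem_sdiff.mp hxT).1
      have hxN : x ∉ N := (mem_sdiff.mp hxT).2
      have hxI : x ∉ I := (mem_sdiff.mp hxZI).2
      have hxB' : x ∉ B := fun h => hxI (mem_sdiff.mp h).1
      have hAcard : (insert x B).card = B.card + 1 := card_insert_of_notMem hxB'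
      have hBcard : B.card + S.card = I.card := card_sdiff_add_card_eq_card hSI
      have hScard1 : 1 ≤ S.card := card_pos.mpr hSne
      obtain ⟨A', h1, h2, h3, h4⟩ := M.augment (S.card - 1) (insert x B) I hind hI (by omega)
      have hA'sub : A' ⊆ insert x I := by
        intro z hz
        rcases mem_union.mp (h2 hz) with hz | hz
        · rcases mem_insert.mp hz with rfl | hz
          · exact mem_insert_self _ _
          · exact mem_insert_of_mem (mem_sdiff.mp hz).1
        · exact mem_insert_of_mem hz
      -- the unique missing element
      have hmiss : ((insert x I) \ A').card = 1 := by
        rw [card_sdiff_of_subset hA'sub, card_insert_of_notMem hxI, h3]; omega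
      obtain ⟨y, hy⟩ := card_eq_one.mp hmiss
      have hyA' : y ∉ A' := by
        have : y ∈ insert x I \ A' := hy ▸ mem_singleton_self y
        exact (mem_sdiff.mp this).2
      have hyxI : y ∈ insert x I := by
        have : y ∈ insert x I \ A' := hy ▸ mem_singleton_self y
        exact (mem_sdiff.mp this).1
      have hxA' : x ∈ A' := h1 (mem_insert_self _ _)
      have hyx : y ≠ x := fun h => hyA' (h ▸ hxA')
      have hyI : y ∈ I := by
        rcases mem_insert.mp hyxI with h | h
        · exact absurd h hyx
        · exact h
      have hyS : y ∈ S := by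
        by_contra h
        exact hyA' (h1 (mem_insert_of_mem (mem_sdiff.mpr ⟨hyI, h⟩)))
      -- insert x (I.erase y) ⊆ A'
      have hsub : insert x (I.erase y) ⊆ A' := by
        intro z hz
        rcases mem_insert.mp hz with rfl | hz
        · exact hxA'
        · have hzI : z ∈ I := mem_of_mem_erase hz
          have hzy : z ≠ y := ne_of_mem_erase hz
          by_contra hzA'
          have : z ∈ insert x I \ A' := mem_sdiff.mpr ⟨mem_insert_of_mem hzI, hzA'⟩
          rw [hy, mem_singleton] at this
          exact hzy this
      have hindxy : M.Indep (insert x (I.erase y)) := M.subset_indep h4 hsub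
      -- so x ∈ N, contradiction
      obtain ⟨y', hy's, hy'⟩ := mem_image.mp hyS
      apply hxN
      apply mem_biUnion.mpr
      exact ⟨y', hy's, mem_filter.mpr ⟨hxZI, by rw [hy']; exact hindxy⟩⟩
    -- apply the rank bound to K = (I \ Z) ∪ T
    set K : Finset α := (I \ Z) ∪ T with hK
    have hKsub : K ⊆ B ∪ T := by
      apply union_subset_union_left
      intro a ha
      rw [mem_sdiff] at ha ⊢
      exact ⟨ha.1, fun h => ha.2 (hSZ h)⟩
    have hKindep : M.Indep K := by
      apply M.subset_indep hIZ
      apply union_subset_union_right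
      exact sdiff_subset
    have hle := M.card_le_of_span hBI hKindep hKsub key
    have hKcard : K.card = (I \ Z).card + T.card := by
      apply card_union_of_disjoint
      apply Finset.disjoint_left.mpr
      intro a ha hb
      exact (mem_sdiff.mp ((mem_sdiff.mp hb).1)).2 (mem_sdiff.mp ha).1
    have hTcard : T.card + N.card = (Z \ I).card := card_sdiff_add_card_eq_card hNsub
    have hBcard : B.card + S.card = I.card := card_sdiff_add_card_eq_card hSI
    omega
  obtain ⟨f, hfinj, hf⟩ := (Finset.all_card_le_biUnion_card_iff_exists_injective t).mp hall
  refine ⟨fun y => ⟨f y, (mem_filter.mp (hf y)).1⟩, ?_, ?_⟩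
  · rw [Fintype.bijective_iff_injective_and_card]
    constructor
    · intro a b hab
      exact hfinj (congrArg Subtype.val hab)
    · simp only [Fintype.card_coe]; exact hZeq
  · intro y
    exact (mem_filter.mp (hf y)).2
end

section
/- Let M = (E,𝓘) be a matroid, let I ∈ 𝓘, and let Z ⊆ E satisfy |I△Z| = |I|, where △ denotes symmetric difference. If there exists exactly one bijection φ : Z∩I → Z\I such that (I − y) + φ(y) ∈ 𝓘 for every y ∈ Z∩I (i.e., the exchangeability arcs contain a unique perfect matching on Z), then I△Z ∈ 𝓘. -/
open Classical Finset

lemma spanned_card_le {α : Type} (M : FinMatroid α) {K A : Finset α}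
    (hK : M.Indep K) (hA : M.Indep A)
    (h : ∀ x ∈ A, x ∉ K → ¬ M.Indep (insert x K)) : A.card ≤ K.card := by
  by_contra hlt
  push_neg at hlt
  obtain ⟨x, hx, hxi⟩ := M.exchange hK hA hlt
  rw [Finset.mem_sdiff] at hx
  exact h x hx.1 hx.2 hxi

lemma exists_maximal_ext {α : Type} (M : FinMatroid α) {A U : Finset α}
    (hA : M.Indep A) (hAU : A ⊆ U) :
    ∃ B, A ⊆ B ∧ B ⊆ U ∧ M.Indep B ∧ ∀ z ∈ U, z ∉ B → ¬ M.Indep (insert z B) := by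
  classical
  set s := U.powerset.filter (fun B => A ⊆ B ∧ M.Indep B) with hs
  have hne : s.Nonempty := ⟨A, by simp [hs, Finset.mem_powerset, hAU, hA]⟩
  obtain ⟨B, hBs, hmax⟩ := s.exists_max_image Finset.card hne
  simp only [hs, Finset.mem_filter, Finset.mem_powerset] at hBs
  refine ⟨B, hBs.2.1, hBs.1, hBs.2.2, ?_⟩
  intro z hzU hzB hind
  have hmem : insert z B ∈ s := by
    simp only [hs, Finset.mem_filter, Finset.mem_powerset]
    exact ⟨Finset.insert_subset hzU hBs.1, hBs.2.1.trans (Finset.subset_insert _ _), hind⟩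
  have h1 := hmax _ hmem
  have h2 := Finset.card_insert_of_notMem hzB
  omega

/-- From a fixed-point-free "successor" function on a nonempty invariant predicate,
extract a nontrivial permutation that agrees with `f` wherever it moves points. -/
lemma cycle_perm {T : Type} [Fintype T] (P : T → Prop) (f : T → T)
    (hP : ∀ p, P p → P (f p)) (hnefix : ∀ p, P p → f p ≠ p) {s0 : T} (h0 : P s0) :
    ∃ σ : T → T, Function.Bijective σ ∧
      (∀ y, σ y = y ∨ (P y ∧ σ y = f y)) ∧ ∃ y, σ y ≠ y := by
  classical
  have key : ∀ (y0 : T) (m : ℕ), 0 < m → f^[m] y0 = y0 → P y0 →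
      ∃ σ : T → T, Function.Bijective σ ∧
        (∀ y, σ y = y ∨ (P y ∧ σ y = f y)) ∧ ∃ y, σ y ≠ y := by
    intro y0 m hm hper hPy0
    set O := (Finset.range m).image (fun t => f^[t] y0) with hO
    have hy0O : y0 ∈ O := Finset.mem_image.mpr ⟨0, Finset.mem_range.mpr hm, rfl⟩
    have hPiter : ∀ t, P (f^[t] y0) := by
      intro t
      induction t with
      | zero => exact hPy0
      | succ t ih =>
        have : f^[t+1] y0 = f (f^[t] y0) := Function.iterate_succ_apply' f t y0
        rw [this]; exact hP _ ih
    have hOP : ∀ y ∈ O, P y := by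
      intro y hy
      obtain ⟨t, _, ht⟩ := Finset.mem_image.mp hy
      exact ht ▸ hPiter t
    have hfO : ∀ y ∈ O, f y ∈ O := by
      intro y hy
      obtain ⟨t, htm, ht⟩ := Finset.mem_image.mp hy
      rw [Finset.mem_range] at htm
      have hstep : f (f^[t] y0) = f^[t+1] y0 := (Function.iterate_succ_apply' f t y0).symm
      rw [← ht, hstep]
      by_cases hc : t + 1 = m
      · rw [hc, hper]; exact hy0O
      · exact Finset.mem_image.mpr ⟨t + 1, Finset.mem_range.mpr (by omega), rfl⟩
    have himg : O.image f = O := by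
      apply Finset.Subset.antisymm
      · intro y hy
        obtain ⟨z, hz, hzy⟩ := Finset.mem_image.mp hy
        exact hzy ▸ hfO z hz
      · intro y hy
        obtain ⟨t, htm, ht⟩ := Finset.mem_image.mp hy
        rw [Finset.mem_range] at htm
        rcases Nat.eq_zero_or_pos t with h0' | hpos
        · refine Finset.mem_image.mpr ⟨f^[m-1] y0, ?_, ?_⟩
          · exact Finset.mem_image.mpr ⟨m - 1, Finset.mem_range.mpr (by omega), rfl⟩
          · have hstep : f (f^[m-1] y0) = f^[m-1+1] y0 :=
              (Function.iterate_succ_apply' f (m-1) y0).symm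
            have hm1 : m - 1 + 1 = m := by omega
            rw [hstep, hm1, hper, ← ht, h0']
            simp
        · refine Finset.mem_image.mpr ⟨f^[t-1] y0, ?_, ?_⟩
          · exact Finset.mem_image.mpr ⟨t - 1, Finset.mem_range.mpr (by omega), rfl⟩
          · have hstep : f (f^[t-1] y0) = f^[t-1+1] y0 :=
              (Function.iterate_succ_apply' f (t-1) y0).symm
            have ht1 : t - 1 + 1 = t := by omega
            rw [hstep, ht1, ht]
    have hinjO : Set.InjOn f O := Finset.injOn_of_card_image_eq (by rw [himg])
    refine ⟨fun y => if y ∈ O then f y else y, ?_, ?_, ?_⟩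
    · apply Finite.injective_iff_bijective.mp
      intro y1 y2 h
      simp only at h
      by_cases h1 : y1 ∈ O <;> by_cases h2 : y2 ∈ O
      · rw [if_pos h1, if_pos h2] at h; exact hinjO h1 h2 h
      · rw [if_pos h1, if_neg h2] at h; exact absurd (h ▸ hfO y1 h1) h2
      · rw [if_neg h1, if_pos h2] at h; exact absurd (h.symm ▸ hfO y2 h2) h1
      · rw [if_neg h1, if_neg h2] at h; exact h
    · intro y
      by_cases hy : y ∈ O
      · right; exact ⟨hOP y hy, if_pos hy⟩
      · left; exact if_neg hy
    · refine ⟨y0, ?_⟩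
      show (if y0 ∈ O then f y0 else y0) ≠ y0
      rw [if_pos hy0O]
      exact hnefix y0 hPy0
  obtain ⟨a, b, hab, heq⟩ : ∃ a b, a < b ∧ f^[a] s0 = f^[b] s0 := by
    obtain ⟨a, b, hne2, heq⟩ := Finite.exists_ne_map_eq_of_infinite (fun n : ℕ => f^[n] s0)
    rcases hne2.lt_or_gt with h | h
    exacts [⟨a, b, h, heq⟩, ⟨b, a, h, heq.symm⟩]
  have hPa : ∀ n, P (f^[n] s0) := by
    intro n
    induction n with
    | zero => exact h0
    | succ t ih =>
      have : f^[t+1] s0 = f (f^[t] s0) := Function.iterate_succ_apply' f t s0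
      rw [this]; exact hP _ ih
  refine key (f^[a] s0) (b - a) (by omega) ?_ (hPa a)
  rw [← Function.iterate_add_apply, Nat.sub_add_cancel (le_of_lt hab)]
  exact heq.symm

/-- **Unique perfect matching lemma (Krogdahl).** If `I` is independent,
`|I △ Z| = |I|`, and the exchangeability arcs contain a *unique* perfect matching
on `Z` (i.e. there is exactly one bijection `φ : Z ∩ I → Z \ I` with
`I - y + φ(y)` independent for all `y ∈ Z ∩ I`), then `I △ Z` is independent. -/
theorem stmt_2 {α : Type} [Fintype α] (M : FinMatroid α) (I Z : Finset α)
    (hI : M.Indep I)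
    (hcard : ((I \ Z) ∪ (Z \ I)).card = I.card)
    (huniq : ∃! φ : {y : α // y ∈ Z ∩ I} → {x : α // x ∈ Z \ I},
      Function.Bijective φ ∧
      ∀ y : {y : α // y ∈ Z ∩ I}, M.Indep (insert (φ y : α) (I.erase (y : α)))) :
    M.Indep ((I \ Z) ∪ (Z \ I)) := by
  classical
  obtain ⟨φ, ⟨hφbij, hφind⟩, hφuniq⟩ := huniq
  by_contra hJ
  set J := (I \ Z) ∪ (Z \ I) with hJdef
  -- a minimal dependent subset C of J
  set s := J.powerset.filter (fun C => ¬ M.Indep C) with hs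
  have hne : s.Nonempty := ⟨J, by simp [hs, hJ]⟩
  obtain ⟨C, hCs, hCmin⟩ := s.exists_min_image Finset.card hne
  simp only [hs, Finset.mem_filter, Finset.mem_powerset] at hCs
  obtain ⟨hCJ, hCdep⟩ := hCs
  have herase : ∀ x ∈ C, M.Indep (C.erase x) := by
    intro x hx
    by_contra hdep
    have hmem : C.erase x ∈ s := by
      simp only [hs, Finset.mem_filter, Finset.mem_powerset]
      exact ⟨(Finset.erase_subset _ _).trans hCJ, hdep⟩
    have h1 := hCmin _ hmem
    have h2 := Finset.card_erase_of_mem hx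
    have h3 := Finset.card_pos.mpr ⟨x, hx⟩
    omega
  have hSne : ∃ q : {y : α // y ∈ Z ∩ I}, ((φ q : α) ∈ C) := by
    have hCnotI : ¬ C ⊆ I := fun h => hCdep (M.subset_indep hI h)
    obtain ⟨x, hxC, hxI⟩ := Finset.not_subset.mp hCnotI
    have hxJ := hCJ hxC
    have hxZI : x ∈ Z \ I := by
      rw [hJdef, Finset.mem_union] at hxJ
      rcases hxJ with h | h
      · exact absurd (Finset.mem_sdiff.mp h).1 hxI
      · exact h
    obtain ⟨q, hq⟩ := hφbij.2 ⟨x, hxZI⟩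
    refine ⟨q, ?_⟩
    rw [hq]
    exact hxC
  by_cases hp : ∃ p : {y : α // y ∈ Z ∩ I}, (φ p : α) ∈ C ∧
      ∀ q : {y : α // y ∈ Z ∩ I}, (φ q : α) ∈ C → q ≠ p →
        ¬ M.Indep (insert (φ q : α) (I.erase (p : α)))
  · -- main case: rank contradiction
    obtain ⟨p, hpC, hpmax⟩ := hp
    have hpI : (p : α) ∈ I := (Finset.mem_inter.mp p.2).2
    have hpZ : (p : α) ∈ Z := (Finset.mem_inter.mp p.2).1
    set xs := (φ p : α) with hxs
    have hxsZI : xs ∈ Z \ I := (φ p).2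
    have hxsI : xs ∉ I := (Finset.mem_sdiff.mp hxsZI).2
    set K := I.erase (p : α) with hK
    have hKind : M.Indep K := M.subset_indep hI (Finset.erase_subset _ _)
    have hxsK : M.Indep (insert xs K) := hφind p
    set A := C.erase xs with hA
    have hAind : M.Indep A := herase xs hpC
    obtain ⟨B, hAB, hBU, hBind, hBmax⟩ :=
      exists_maximal_ext M hAind (Finset.subset_union_right (s₁ := K))
    have hBK : B.card ≤ K.card := by
      apply spanned_card_le M hKind hBind
      intro x hxB hxK
      have hxA : x ∈ A := by
        rcases Finset.mem_union.mp (hBU hxB) with h | h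
        · exact absurd h hxK
        · exact h
      have hxC : x ∈ C := Finset.mem_of_mem_erase hxA
      have hxne : x ≠ xs := Finset.ne_of_mem_erase hxA
      have hxJ := hCJ hxC
      rw [hJdef, Finset.mem_union] at hxJ
      rcases hxJ with h | h
      · exfalso
        apply hxK
        rw [hK, Finset.mem_erase]
        refine ⟨?_, (Finset.mem_sdiff.mp h).1⟩
        intro hxp
        exact (Finset.mem_sdiff.mp h).2 (hxp ▸ hpZ)
      · obtain ⟨q, hq⟩ := hφbij.2 ⟨x, h⟩
        have hqC : (φ q : α) ∈ C := by rw [hq]; exact hxC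
        have hqp : q ≠ p := by
          intro hqp
          apply hxne
          rw [hxs, ← hqp, hq]
        have hres := hpmax q hqC hqp
        rw [hq] at hres
        exact hres
    have hKB : (insert xs K).card ≤ B.card := by
      apply spanned_card_le M hBind hxsK
      intro x hxmem hxB
      rcases Finset.mem_insert.mp hxmem with h | h
      · subst h
        intro hind
        apply hCdep
        apply M.subset_indep hind
        intro c hc
        by_cases hcx : c = xs
        · exact hcx ▸ Finset.mem_insert_self _ _
        · exact Finset.mem_insert_of_mem (hAB (Finset.mem_erase.mpr ⟨hcx, hc⟩))
      · exact hBmax x (Finset.mem_union_left _ h) hxB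
    have hxsnotK : xs ∉ K := fun h => hxsI (Finset.mem_of_mem_erase h)
    have hic := Finset.card_insert_of_notMem hxsnotK
    omega
  · -- uniqueness-violation case
    push_neg at hp
    have hg : ∀ p : {y : α // y ∈ Z ∩ I}, (φ p : α) ∈ C →
        ∃ q, ((φ q : α) ∈ C) ∧ q ≠ p ∧
          M.Indep (insert (φ q : α) (I.erase (p : α))) := hp
    set f : {y : α // y ∈ Z ∩ I} → {y : α // y ∈ Z ∩ I} :=
      fun p => if h : (φ p : α) ∈ C then (hg p h).choose else p with hf
    have hf1 : ∀ p, (φ p : α) ∈ C → (φ (f p) : α) ∈ C := by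
      intro p h; rw [hf]; simp only [dif_pos h]; exact (hg p h).choose_spec.1
    have hf2 : ∀ p, (φ p : α) ∈ C → f p ≠ p := by
      intro p h; rw [hf]; simp only [dif_pos h]; exact (hg p h).choose_spec.2.1
    have hf3 : ∀ p, (φ p : α) ∈ C →
        M.Indep (insert (φ (f p) : α) (I.erase (p : α))) := by
      intro p h; rw [hf]; simp only [dif_pos h]; exact (hg p h).choose_spec.2.2
    obtain ⟨s0, hs0⟩ := hSne
    obtain ⟨σ, hσbij, hσcases, y1, hy1⟩ :=
      cycle_perm (fun q => (φ q : α) ∈ C) f hf1 hf2 hs0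
    have hφ'prop : Function.Bijective (φ ∘ σ) ∧
        ∀ y, M.Indep (insert ((φ ∘ σ) y : α) (I.erase (y : α))) := by
      refine ⟨hφbij.comp hσbij, ?_⟩
      intro y
      rcases hσcases y with h | ⟨hy, h⟩
      · show M.Indep (insert (φ (σ y) : α) (I.erase (y : α)))
        rw [h]; exact hφind y
      · show M.Indep (insert (φ (σ y) : α) (I.erase (y : α)))
        rw [h]; exact hf3 y hy
    have heqφ : φ ∘ σ = φ := hφuniq (φ ∘ σ) hφ'prop
    have h1 : φ (σ y1) = φ y1 := congrFun heqφ y1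
    exact hy1 (hφbij.1 h1)
end

section
/- There exist loopless matroids M1 = (E,𝓘1), M2 = (E,𝓘2), and M2' = (E,𝓘2') on a common finite ground set E, with rank functions r1, r2, r2', such that max(r1(X), r2(X)) = max(r1(X), r2'(X)) for every X ⊆ E, and yet 𝓘1∩𝓘2 ≠ 𝓘1∩𝓘2'. (Hence the common independence oracle of two matroids is not determined by their maximum rank oracle.) -/
open Classical Finset

/-- The free matroid: every set is independent. -/
def freeM (α : Type) : FinMatroid α where
  Indep := fun _ => True
  empty_indep := trivial
  subset_indep := fun _ _ _ _ => trivial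
  exchange := by
    intro I J _ _ hlt
    obtain ⟨x, hxJ, hxI⟩ := Finset.not_subset.mp
      (fun h => absurd (Finset.card_le_card h) (not_le.mpr hlt))
    exact ⟨x, Finset.mem_sdiff.mpr ⟨hxJ, hxI⟩, trivial⟩

/-- The uniform matroid of rank 1. -/
def uniM (α : Type) : FinMatroid α where
  Indep := fun I => I.card ≤ 1
  empty_indep := by simp
  subset_indep := fun I J hJ hIJ => le_trans (Finset.card_le_card hIJ) hJ
  exchange := by
    intro I J hI hJ hlt
    obtain ⟨x, hxJ, hxI⟩ := Finset.not_subset.mp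
      (fun h => absurd (Finset.card_le_card h) (not_le.mpr hlt))
    refine ⟨x, Finset.mem_sdiff.mpr ⟨hxJ, hxI⟩, ?_⟩
    have hI0 : I.card = 0 := by omega
    have : I = ∅ := Finset.card_eq_zero.mp hI0
    simp [this]

lemma myRank_le_card {α : Type} (M : FinMatroid α) (X : Finset α) : M.rank X ≤ X.card := by
  apply Finset.sup_le
  intro Y hY
  simp only [Finset.mem_filter, Finset.mem_powerset] at hY
  exact Finset.card_le_card hY.1

lemma myRank_free {α : Type} (X : Finset α) : (freeM α).rank X = X.card := by
  refine le_antisymm (myRank_le_card _ X) ?_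
  apply Finset.le_sup (f := Finset.card)
  exact Finset.mem_filter.mpr ⟨Finset.mem_powerset.mpr subset_rfl, trivial⟩

/-- There exist loopless matroids `M1`, `M2`, `M2'` on a common finite ground set
whose maximum rank functions agree (`max (r1 X) (r2 X) = max (r1 X) (r2' X)` for
all `X`), and yet `𝓘1 ∩ 𝓘2 ≠ 𝓘1 ∩ 𝓘2'`: the common independence oracle is not
determined by the maximum rank oracle. -/
theorem stmt_5 :
    ∃ (n : ℕ) (M1 M2 M2' : FinMatroid (Fin n)),
      (∀ a : Fin n, M1.Indep {a}) ∧ (∀ a, M2.Indep {a}) ∧ (∀ a, M2'.Indep {a}) ∧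
      (∀ X : Finset (Fin n),
        max (M1.rank X) (M2.rank X) = max (M1.rank X) (M2'.rank X)) ∧
      {X : Finset (Fin n) | M1.Indep X ∧ M2.Indep X}
        ≠ {X : Finset (Fin n) | M1.Indep X ∧ M2'.Indep X} := by
  refine ⟨2, freeM _, freeM _, uniM _, fun a => trivial, fun a => trivial,
    fun a => by simp [uniM], ?_, ?_⟩
  · intro X
    rw [myRank_free, max_self, max_eq_left (myRank_le_card _ X)]
  · intro h
    have h2 := Set.ext_iff.mp h ({0, 1} : Finset (Fin 2))
    have hle : (({0, 1} : Finset (Fin 2)).card ≤ 1) := (h2.mp ⟨trivial, trivial⟩).2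
    revert hle
    decide
end

section
/- There exist loopless matroids M1, M2, M1', M2' on a common ground set E of size 4, with rank functions r1, r2, r1', r2' and independent set families 𝓘1, 𝓘2, 𝓘1', 𝓘2', such that r1(X) + r2(X) = r1'(X) + r2'(X) for every X ⊆ E and 𝓘1∩𝓘2 = 𝓘1'∩𝓘2', and yet min(r1(E), r2(E)) ≠ min(r1'(E), r2'(E)). (Hence the minimum rank oracle of two matroids is determined neither by their rank sum oracle nor by their common independence oracle.) -/
open Classical Finset

/-- Build a matroid on `Fin 4` from a boolean independence predicate. -/
def mkB (p : Finset (Fin 4) → Bool) (h0 : p ∅ = true)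
    (hsub : ∀ I J : Finset (Fin 4), p J = true → I ⊆ J → p I = true)
    (hex : ∀ I J : Finset (Fin 4), p I = true → p J = true → I.card < J.card →
      ∃ x, x ∈ J ∧ x ∉ I ∧ p (insert x I) = true) : FinMatroid (Fin 4) where
  Indep X := p X = true
  empty_indep := h0
  subset_indep I J hJ hIJ := hsub I J hJ hIJ
  exchange I J hI hJ hlt := by
    have e : (fun a b => Classical.propDecidable (a = b) : DecidableEq (Fin 4))
        = instDecidableEqFin 4 := by
      funext a b; exact Subsingleton.elim _ _
    rw [e]
    obtain ⟨x, hxJ, hxI, hp⟩ := hex I J hI hJ hlt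
    exact ⟨x, Finset.mem_sdiff.mpr ⟨hxJ, hxI⟩, hp⟩

theorem myrank_eq (M : FinMatroid (Fin 4)) (p : Finset (Fin 4) → Bool)
    (h : ∀ X, M.Indep X ↔ p X = true) (X : Finset (Fin 4)) :
    M.rank X = (X.powerset.filter (fun Y => p Y = true)).sup Finset.card := by
  unfold FinMatroid.rank
  rw [Finset.filter_congr (fun Y _ => h Y)]

def p1 : Finset (Fin 4) → Bool := fun X => !(0 ∈ X && 1 ∈ X) && !(2 ∈ X && 3 ∈ X)
def p2 : Finset (Fin 4) → Bool := fun _ => true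
def q1 : Finset (Fin 4) → Bool := fun X => !(2 ∈ X && 3 ∈ X)
def q2 : Finset (Fin 4) → Bool := fun X => !(0 ∈ X && 1 ∈ X)

/-- There exist loopless matroids `M1, M2, M1', M2'` on a common ground set of size 4
with `r1 X + r2 X = r1' X + r2' X` for all `X` and `𝓘1 ∩ 𝓘2 = 𝓘1' ∩ 𝓘2'`, yet
`min (r1 E) (r2 E) ≠ min (r1' E) (r2' E)`: the minimum rank oracle is determined
neither by the rank sum oracle nor by the common independence oracle. -/
theorem stmt_6 :
    ∃ M1 M2 M1' M2' : FinMatroid (Fin 4),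
      (∀ a : Fin 4, M1.Indep {a}) ∧ (∀ a, M2.Indep {a}) ∧
      (∀ a, M1'.Indep {a}) ∧ (∀ a, M2'.Indep {a}) ∧
      (∀ X : Finset (Fin 4), M1.rank X + M2.rank X = M1'.rank X + M2'.rank X) ∧
      ({X : Finset (Fin 4) | M1.Indep X ∧ M2.Indep X}
        = {X : Finset (Fin 4) | M1'.Indep X ∧ M2'.Indep X}) ∧
      min (M1.rank Finset.univ) (M2.rank Finset.univ)
        ≠ min (M1'.rank Finset.univ) (M2'.rank Finset.univ) := by
  refine ⟨mkB p1 (by decide) (by decide) (by decide),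
    mkB p2 (by decide) (by decide)
      (by
        intro I J _ _ hlt
        have hns : ¬ J ⊆ I := fun h => absurd (Finset.card_le_card h) (by omega)
        obtain ⟨x, hxJ, hxI⟩ := Finset.not_subset.mp hns
        exact ⟨x, hxJ, hxI, rfl⟩),
    mkB q1 (by decide) (by decide) (by decide),
    mkB q2 (by decide) (by decide) (by decide),
    (by intro a; show p1 {a} = true; revert a; decide),
    (by intro a; show p2 {a} = true; revert a; decide),
    (by intro a; show q1 {a} = true; revert a; decide),
    (by intro a; show q2 {a} = true; revert a; decide), ?_, ?_, ?_⟩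
  · intro X
    rw [myrank_eq _ p1 (fun _ => Iff.rfl), myrank_eq _ p2 (fun _ => Iff.rfl),
      myrank_eq _ q1 (fun _ => Iff.rfl), myrank_eq _ q2 (fun _ => Iff.rfl)]
    revert X; decide
  · ext X
    simp only [Set.mem_setOf_eq]
    revert X
    show ∀ X : Finset (Fin 4), (p1 X = true ∧ p2 X = true) ↔ (q1 X = true ∧ q2 X = true)
    decide
  · rw [myrank_eq _ p1 (fun _ => Iff.rfl), myrank_eq _ p2 (fun _ => Iff.rfl),
      myrank_eq _ q1 (fun _ => Iff.rfl), myrank_eq _ q2 (fun _ => Iff.rfl)]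
    decide
end

section
/- There exist loopless matroids N1, N2, N1', N2' on a common ground set E of size 4, with rank functions rN1, rN2, rN1', rN2' and independent set families 𝓙1, 𝓙2, 𝓙1', 𝓙2', such that 𝓙1∩𝓙2 = 𝓙1'∩𝓙2' and max(rN1(X), rN2(X)) = max(rN1'(X), rN2'(X)) for every X ⊆ E, and yet min(rN1(E), rN2(E)) ≠ min(rN1'(E), rN2'(E)). (Hence the minimum rank oracle is not determined by the common independence and maximum rank oracles together.) -/
open Classical Finset

def L1 : Finset (Finset (Fin 4)) :=
  {∅, {0}, {1}, {2}, {3}, {0,2}, {0,3}, {1,2}, {1,3}}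

def L2 : Finset (Finset (Fin 4)) :=
  {∅, {0}, {1}, {2}, {3}, {0,1}, {0,2}, {0,3}, {1,2}, {1,3}, {2,3},
   {0,1,2}, {0,1,3}, {0,2,3}, {1,2,3}}

def L3 : Finset (Finset (Fin 4)) :=
  {∅, {0}, {1}, {2}, {3}, {0,1}, {0,2}, {0,3}, {1,2}, {1,3},
   {0,1,2}, {0,1,3}}

def L4 : Finset (Finset (Fin 4)) :=
  {∅, {0}, {1}, {2}, {3}, {0,2}, {0,3}, {1,2}, {1,3}, {2,3},
   {0,2,3}, {1,2,3}}

def mkM (L : Finset (Finset (Fin 4)))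
    (h1 : (∅ : Finset (Fin 4)) ∈ L)
    (h2 : ∀ ⦃I J : Finset (Fin 4)⦄, J ∈ L → I ⊆ J → I ∈ L)
    (h3 : ∀ ⦃I J : Finset (Fin 4)⦄, I ∈ L → J ∈ L → I.card < J.card →
      ∃ x ∈ J, x ∉ I ∧ insert x I ∈ L) : FinMatroid (Fin 4) :=
  ⟨(· ∈ L), h1, h2, by
    intro I J hI hJ h
    obtain ⟨x, hxJ, hxI, h'⟩ := h3 hI hJ h
    refine ⟨x, ?_, ?_⟩
    · have hx : x ∈ J \ I := Finset.mem_sdiff.mpr ⟨hxJ, hxI⟩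
      convert hx using 3 <;> exact Subsingleton.elim _ _
    · convert h' using 3 <;> exact Subsingleton.elim _ _⟩

lemma mkM_rank (L h1 h2 h3) (X : Finset (Fin 4)) :
    (mkM L h1 h2 h3).rank X = (X.powerset.filter (· ∈ L)).sup Finset.card := by
  unfold FinMatroid.rank mkM
  congr

/-- There exist loopless matroids `N1, N2, N1', N2'` on a common ground set of size 4
with `𝓙1 ∩ 𝓙2 = 𝓙1' ∩ 𝓙2'` and agreeing maximum rank functions, yet
`min (rN1 E) (rN2 E) ≠ min (rN1' E) (rN2' E)`: the minimum rank oracle is not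
determined by the common independence and maximum rank oracles together. -/
theorem stmt_7 :
    ∃ N1 N2 N1' N2' : FinMatroid (Fin 4),
      (∀ a : Fin 4, N1.Indep {a}) ∧ (∀ a, N2.Indep {a}) ∧
      (∀ a, N1'.Indep {a}) ∧ (∀ a, N2'.Indep {a}) ∧
      ({X : Finset (Fin 4) | N1.Indep X ∧ N2.Indep X}
        = {X : Finset (Fin 4) | N1'.Indep X ∧ N2'.Indep X}) ∧
      (∀ X : Finset (Fin 4),
        max (N1.rank X) (N2.rank X) = max (N1'.rank X) (N2'.rank X)) ∧
      min (N1.rank Finset.univ) (N2.rank Finset.univ)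
        ≠ min (N1'.rank Finset.univ) (N2'.rank Finset.univ) := by
  refine ⟨mkM L1 (by decide) (by decide) (by decide),
          mkM L2 (by decide) (by decide) (by decide),
          mkM L3 (by decide) (by decide) (by decide),
          mkM L4 (by decide) (by decide) (by decide),
          (by intro a; show ({a} : Finset (Fin 4)) ∈ L1; fin_cases a <;> decide),
          (by intro a; show ({a} : Finset (Fin 4)) ∈ L2; fin_cases a <;> decide),
          (by intro a; show ({a} : Finset (Fin 4)) ∈ L3; fin_cases a <;> decide),
          (by intro a; show ({a} : Finset (Fin 4)) ∈ L4; fin_cases a <;> decide), ?_, ?_, ?_⟩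
  · ext X
    show X ∈ L1 ∧ X ∈ L2 ↔ X ∈ L3 ∧ X ∈ L4
    revert X
    decide
  · intro X
    rw [mkM_rank, mkM_rank, mkM_rank, mkM_rank]
    revert X
    decide
  · rw [mkM_rank, mkM_rank, mkM_rank, mkM_rank]
    decide
end

section
/- There exist loopless matroids M1 = (E,𝓘1), M2 = (E,𝓘2), and M2' = (E,𝓘2') on a common finite ground set E, with rank functions r1, r2, r2', such that min(r1(X), r2(X)) = min(r1(X), r2'(X)) for every X ⊆ E and 𝓘1∩𝓘2 = 𝓘1∩𝓘2', and yet r1(E) + r2(E) ≠ r1(E) + r2'(E). (Hence the rank sum oracle of two matroids is determined neither by their minimum rank oracle nor by their common independence oracle.) -/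
open Classical Finset

/-- The uniform matroid of rank `k`. -/
def unif (α : Type) (k : ℕ) : FinMatroid α where
  Indep X := X.card ≤ k
  empty_indep := by simp
  subset_indep := fun I J hJ hIJ => le_trans (Finset.card_le_card hIJ) hJ
  exchange := by
    intro I J hI hJ hlt
    have : (J \ I).Nonempty := by
      rw [← Finset.card_pos]
      have := Finset.card_le_card_sdiff_add_card (s := J) (t := I)
      omega
    obtain ⟨x, hx⟩ := this
    refine ⟨x, hx, ?_⟩
    show (insert x I).card ≤ k
    rw [Finset.card_insert_of_notMem (Finset.mem_sdiff.mp hx).2]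
    omega

lemma unif_rank {α : Type} [DecidableEq α] (k : ℕ) (X : Finset α) :
    (unif α k).rank X = min X.card k := by
  apply le_antisymm
  · apply Finset.sup_le
    intro Y hY
    simp only [Finset.mem_filter, Finset.mem_powerset] at hY
    exact le_min (Finset.card_le_card hY.1) hY.2
  · obtain ⟨Y, hYX, hYcard⟩ := Finset.exists_subset_card_eq (s := X) (n := min X.card k) (min_le_left _ _)
    calc min X.card k = Y.card := hYcard.symm
      _ ≤ _ := Finset.le_sup (by
        simp only [Finset.mem_filter, Finset.mem_powerset]
        exact ⟨hYX, hYcard.le.trans (min_le_right _ _)⟩)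

/-- There exist loopless matroids `M1, M2, M2'` on a common finite ground set with
`min (r1 X) (r2 X) = min (r1 X) (r2' X)` for all `X` and `𝓘1 ∩ 𝓘2 = 𝓘1 ∩ 𝓘2'`,
yet `r1 E + r2 E ≠ r1 E + r2' E`: the rank sum oracle is determined neither by the
minimum rank oracle nor by the common independence oracle. -/
theorem stmt_8 :
    ∃ (n : ℕ) (M1 M2 M2' : FinMatroid (Fin n)),
      (∀ a : Fin n, M1.Indep {a}) ∧ (∀ a, M2.Indep {a}) ∧ (∀ a, M2'.Indep {a}) ∧
      (∀ X : Finset (Fin n),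
        min (M1.rank X) (M2.rank X) = min (M1.rank X) (M2'.rank X)) ∧
      ({X : Finset (Fin n) | M1.Indep X ∧ M2.Indep X}
        = {X : Finset (Fin n) | M1.Indep X ∧ M2'.Indep X}) ∧
      M1.rank Finset.univ + M2.rank Finset.univ
        ≠ M1.rank Finset.univ + M2'.rank Finset.univ := by
  refine ⟨2, unif _ 1, unif _ 1, unif _ 2, ?_, ?_, ?_, ?_, ?_, ?_⟩
  · intro a; simp [unif]
  · intro a; simp [unif]
  · intro a; simp [unif]
  · intro X
    simp only [unif_rank]
    omega
  · ext X
    simp only [Set.mem_setOf_eq, unif]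
    constructor
    · rintro ⟨h1, h2⟩; exact ⟨h1, by omega⟩
    · rintro ⟨h1, h2⟩; exact ⟨h1, h1⟩
  · simp only [unif_rank]
    simp [Finset.card_univ]
end

section
/- There exist loopless matroids N1, N2, N1', N2' on a common ground set E of size 4, with rank functions rN1, rN2, rN1', rN2' and independent set families 𝓙1, 𝓙2, 𝓙1', 𝓙2', such that 𝓙1∩𝓙2 = 𝓙1'∩𝓙2' and max(rN1(X), rN2(X)) = max(rN1'(X), rN2'(X)) for every X ⊆ E, and yet rN1(E) + rN2(E) ≠ rN1'(E) + rN2'(E). (Hence the rank sum oracle is not determined by the common independence and maximum rank oracles together.) -/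
open Classical Finset

def mk (L : Finset (Finset (Fin 4)))
    (h1 : ∅ ∈ L)
    (h2 : ∀ I J : Finset (Fin 4), J ∈ L → I ⊆ J → I ∈ L)
    (h3 : ∀ I J : Finset (Fin 4), I ∈ L → J ∈ L → I.card < J.card →
      ∃ x ∈ J \ I, insert x I ∈ L) : FinMatroid (Fin 4) :=
  ⟨fun X => X ∈ L, h1, fun I J hJ hIJ => h2 I J hJ hIJ, fun I J hI hJ hc => by
    have e : (fun a b => propDecidable (a = b) : DecidableEq (Fin 4)) = instDecidableEqFin 4 :=
      Subsingleton.elim _ _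
    convert h3 I J hI hJ hc⟩

lemma mk_rank (L : Finset (Finset (Fin 4))) (h1 h2 h3) (X : Finset (Fin 4)) :
    (mk L h1 h2 h3).rank X = (X.powerset.filter (fun Y => Y ∈ L)).sup Finset.card := by
  unfold FinMatroid.rank
  exact congrArg (fun s => Finset.sup s Finset.card) (Finset.filter_congr fun Y _ => Iff.rfl)

/-- There exist loopless matroids `N1, N2, N1', N2'` on a common ground set of size 4
with `𝓙1 ∩ 𝓙2 = 𝓙1' ∩ 𝓙2'` and agreeing maximum rank functions, yet
`rN1 E + rN2 E ≠ rN1' E + rN2' E`: the rank sum oracle is not determined by the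
common independence and maximum rank oracles together. -/
theorem stmt_9 :
    ∃ N1 N2 N1' N2' : FinMatroid (Fin 4),
      (∀ a : Fin 4, N1.Indep {a}) ∧ (∀ a, N2.Indep {a}) ∧
      (∀ a, N1'.Indep {a}) ∧ (∀ a, N2'.Indep {a}) ∧
      ({X : Finset (Fin 4) | N1.Indep X ∧ N2.Indep X}
        = {X : Finset (Fin 4) | N1'.Indep X ∧ N2'.Indep X}) ∧
      (∀ X : Finset (Fin 4),
        max (N1.rank X) (N2.rank X) = max (N1'.rank X) (N2'.rank X)) ∧
      N1.rank Finset.univ + N2.rank Finset.univ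
        ≠ N1'.rank Finset.univ + N2'.rank Finset.univ := by
  refine ⟨mk L1 (by decide) (by decide) (by decide),
          mk L2 (by decide) (by decide) (by decide),
          mk L3 (by decide) (by decide) (by decide),
          mk L4 (by decide) (by decide) (by decide),
          ?_, ?_, ?_, ?_, ?_, ?_, ?_⟩
  · intro a; show _ ∈ L1; revert a; decide
  · intro a; show _ ∈ L2; revert a; decide
  · intro a; show _ ∈ L3; revert a; decide
  · intro a; show _ ∈ L4; revert a; decide
  · ext X
    simp only [Set.mem_setOf_eq]
    show (X ∈ L1 ∧ X ∈ L2) ↔ (X ∈ L3 ∧ X ∈ L4)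
    revert X; decide
  · intro X
    rw [mk_rank, mk_rank, mk_rank, mk_rank]
    revert X; decide
  · rw [mk_rank, mk_rank, mk_rank, mk_rank]
    decide
end

section
/- Let E be a finite set, let H1,…,Hq ⊆ E, and let r, r1,…,rq be nonnegative integers with |E| ≥ r satisfying (H1): |Hi∩Hj| ≤ ri + rj − r for all 1 ≤ i < j ≤ q, and (H2): |E\Hi| + ri ≥ r for all i. Then 𝓘 = {X ⊆ E : |X| ≤ r and |X∩Hi| ≤ ri for all i = 1,…,q} is the family of independent sets of a matroid M on E of rank r, and its rank function satisfies r_M(Z) = min{ r, |Z|, min_{1≤i≤q}( |Z\Hi| + ri ) } for every Z ⊆ E. -/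
open Classical Finset

/-- (Hypergraph characterization of elementary split matroids.) Given `H1, …, Hq ⊆ E`
and nonnegative integers `r, r1, …, rq` with `|E| ≥ r` satisfying (H1) and (H2),
the family `𝓘 = {X : |X| ≤ r, |X ∩ Hi| ≤ ri for all i}` is the family of
independent sets of a matroid `M` of rank `r` whose rank function is
`r_M(Z) = min(r, |Z|, min_i (|Z \ Hi| + ri))`. -/
theorem stmt_15 {α : Type} [Fintype α] (q r : ℕ) (H : Fin q → Finset α)
    (rr : Fin q → ℕ)
    (hcard : r ≤ Fintype.card α)
    (h1 : ∀ i j : Fin q, i < j → (H i ∩ H j).card + r ≤ rr i + rr j)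
    (h2 : ∀ i : Fin q, r ≤ (Finset.univ \ H i).card + rr i) :
    ∃ M : FinMatroid α,
      (∀ X : Finset α, M.Indep X ↔ X.card ≤ r ∧ ∀ i, (X ∩ H i).card ≤ rr i) ∧
      M.rank Finset.univ = r ∧
      ∀ Z : Finset α, (M.rank Z : ℕ∞) =
        min (r : ℕ∞) (min (Z.card : ℕ∞) (⨅ i : Fin q, (((Z \ H i).card + rr i : ℕ) : ℕ∞))) := by
  have h1' : ∀ i j : Fin q, i ≠ j → (H i ∩ H j).card + r ≤ rr i + rr j := by
    intro i j hij
    rcases lt_or_gt_of_ne hij with h | h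
    · exact h1 i j h
    · rw [Finset.inter_comm]
      have := h1 j i h
      omega
  -- uniqueness of tight indices for small sets
  have uniq : ∀ (Y : Finset α), Y.card < r → ∀ i j : Fin q,
      (Y ∩ H i).card = rr i → (Y ∩ H j).card = rr j → i = j := by
    intro Y hYr i j hi hj
    by_contra hne
    have hs := h1' i j hne
    have hk := Finset.card_union_add_card_inter (Y ∩ H i) (Y ∩ H j)
    have c1 : ((Y ∩ H i) ∪ (Y ∩ H j)).card ≤ Y.card :=
      Finset.card_le_card (Finset.union_subset Finset.inter_subset_left Finset.inter_subset_left)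
    have c2 : ((Y ∩ H i) ∩ (Y ∩ H j)).card ≤ (H i ∩ H j).card := by
      apply Finset.card_le_card
      intro x hx
      simp only [Finset.mem_inter] at hx ⊢
      exact ⟨hx.1.2, hx.2.2⟩
    omega
  -- key lemma: if all elements of a nonempty S are blocked, then S is covered by a single
  -- tight hyperedge
  have key : ∀ (Y S : Finset α), (∀ i, (Y ∩ H i).card ≤ rr i) → Y.card < r → S.Nonempty →
      (∀ x ∈ S, x ∉ Y ∧
        ¬ ((insert x Y).card ≤ r ∧ ∀ i, ((insert x Y) ∩ H i).card ≤ rr i)) →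
      ∃ i0 : Fin q, S ⊆ H i0 ∧ (Y ∩ H i0).card = rr i0 := by
    intro Y S hYind hYr hS hblock
    have main : ∀ x ∈ S, ∃ i, x ∈ H i ∧ (Y ∩ H i).card = rr i := by
      intro x hx
      obtain ⟨hxY, hni⟩ := hblock x hx
      have hcard' : (insert x Y).card = Y.card + 1 := Finset.card_insert_of_notMem hxY
      push_neg at hni
      obtain ⟨i, hi⟩ := hni (by omega)
      have hxH : x ∈ H i := by
        by_contra hxH
        have heq : (insert x Y) ∩ H i = Y ∩ H i := by
          ext y
          simp only [Finset.mem_inter, Finset.mem_insert]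
          constructor
          · rintro ⟨(rfl | hy), hyH⟩
            · exact absurd hyH hxH
            · exact ⟨hy, hyH⟩
          · rintro ⟨hy, hyH⟩
            exact ⟨Or.inr hy, hyH⟩
        rw [heq] at hi
        have := hYind i
        omega
      have hsub : (insert x Y) ∩ H i ⊆ insert x (Y ∩ H i) := by
        intro y hy
        simp only [Finset.mem_inter, Finset.mem_insert] at hy ⊢
        rcases hy.1 with rfl | hyY
        · exact Or.inl rfl
        · exact Or.inr ⟨hyY, hy.2⟩
      have c1 := Finset.card_le_card hsub
      have c2 := Finset.card_insert_le x (Y ∩ H i)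
      have c3 := hYind i
      exact ⟨i, hxH, by omega⟩
    obtain ⟨x0, hx0⟩ := hS
    obtain ⟨i0, hx0H, hi0⟩ := main x0 hx0
    refine ⟨i0, ?_, hi0⟩
    intro x hx
    obtain ⟨i, hxH, hi⟩ := main x hx
    rwa [uniq Y hYr i i0 hi hi0] at hxH
  -- construct the matroid
  have hex : ∃ M : FinMatroid α,
      ∀ X : Finset α, M.Indep X ↔ (X.card ≤ r ∧ ∀ i, (X ∩ H i).card ≤ rr i) := by
    refine ⟨FinMatroid.mk (fun X => X.card ≤ r ∧ ∀ i, (X ∩ H i).card ≤ rr i)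
      ?_ ?_ ?_, fun X => Iff.rfl⟩
    · exact ⟨by simp, fun i => by simp⟩
    · intro I J hJ hIJ
      refine ⟨le_trans (Finset.card_le_card hIJ) hJ.1, fun i => ?_⟩
      exact le_trans (Finset.card_le_card (Finset.inter_subset_inter hIJ Finset.Subset.rfl))
        (hJ.2 i)
    · intro I J hI hJ hlt
      by_contra hc
      push_neg at hc
      have hS : (J \ I).Nonempty := by
        rw [Finset.sdiff_nonempty]
        intro hsub
        exact absurd (Finset.card_le_card hsub) (not_le.mpr hlt)
      have hIr : I.card < r := lt_of_lt_of_le hlt hJ.1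
      obtain ⟨i0, hcov, htight⟩ := key I (J \ I) hI.2 hIr hS
        (fun x hx => ⟨(Finset.mem_sdiff.mp hx).2, fun ⟨ha, hb⟩ => by
          obtain ⟨i, hi⟩ := hc x hx ha
          exact absurd (hb i) (not_le.mpr hi)⟩)
      -- card chase
      have hd : Disjoint (J \ I) ((I ∩ J) ∩ H i0) := by
        refine Finset.disjoint_left.mpr ?_
        intro x hx hx'
        exact (Finset.mem_sdiff.mp hx).2 ((Finset.mem_inter.mp (Finset.mem_inter.mp hx').1).1)
      have hU : (J \ I) ∪ ((I ∩ J) ∩ H i0) ⊆ J ∩ H i0 := by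
        apply Finset.union_subset
        · exact Finset.subset_inter Finset.sdiff_subset hcov
        · intro x hx
          rcases Finset.mem_inter.mp hx with ⟨hx1, hx2⟩
          exact Finset.mem_inter.mpr ⟨(Finset.mem_inter.mp hx1).2, hx2⟩
      have e1 : (J \ I).card + ((I ∩ J) ∩ H i0).card ≤ (J ∩ H i0).card := by
        rw [← Finset.card_union_of_disjoint hd]
        exact Finset.card_le_card hU
      have e2 : (J ∩ H i0).card ≤ rr i0 := hJ.2 i0
      have e3 : ((I ∩ H i0) ∩ J).card + ((I ∩ H i0) \ J).card = (I ∩ H i0).card :=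
        Finset.card_inter_add_card_sdiff _ _
      have e4 : (I ∩ H i0) ∩ J = (I ∩ J) ∩ H i0 := by
        ext x
        simp only [Finset.mem_inter]
        tauto
      have e5 : ((I ∩ H i0) \ J).card ≤ (I \ J).card := by
        apply Finset.card_le_card
        intro x hx
        rcases Finset.mem_sdiff.mp hx with ⟨hx1, hx2⟩
        exact Finset.mem_sdiff.mpr ⟨(Finset.mem_inter.mp hx1).1, hx2⟩
      have e6 : (J \ I).card + (J ∩ I).card = J.card := Finset.card_sdiff_add_card_inter _ _
      have e7 : (I \ J).card + (I ∩ J).card = I.card := Finset.card_sdiff_add_card_inter _ _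
      have e8 : (J ∩ I).card = (I ∩ J).card := by rw [Finset.inter_comm]
      rw [e4] at e3
      omega
  obtain ⟨M, hMind⟩ := hex
  -- rank formula
  have formula : ∀ Z : Finset α, (M.rank Z : ℕ∞) =
      min (r : ℕ∞) (min (Z.card : ℕ∞) (⨅ i : Fin q, (((Z \ H i).card + rr i : ℕ) : ℕ∞))) := by
    intro Z
    set s := Z.powerset.filter (fun Y => M.Indep Y) with hs
    have hsne : s.Nonempty := by
      refine ⟨∅, Finset.mem_filter.mpr ⟨Finset.mem_powerset.mpr (Finset.empty_subset Z), ?_⟩⟩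
      exact M.empty_indep
    obtain ⟨Y, hYs, hYsup⟩ := Finset.exists_mem_eq_sup s hsne Finset.card
    have hYZ : Y ⊆ Z := Finset.mem_powerset.mp (Finset.mem_filter.mp hYs).1
    have hYI : M.Indep Y := (Finset.mem_filter.mp hYs).2
    have hrank : M.rank Z = Y.card := by
      unfold FinMatroid.rank
      exact hYsup
    have hYIr : Y.card ≤ r := ((hMind Y).mp hYI).1
    have hYIi : ∀ i, (Y ∩ H i).card ≤ rr i := ((hMind Y).mp hYI).2
    -- the maximum cannot be strictly below the min
    have main : ¬ (Y.card < r ∧ Y.card < Z.card ∧ ∀ i, Y.card < (Z \ H i).card + rr i) := by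
      rintro ⟨hr, hz, hi⟩
      have hne : (Z \ Y).Nonempty := by
        rw [Finset.sdiff_nonempty]
        intro h
        exact absurd (Finset.card_le_card h) (not_le.mpr hz)
      have hblk : ∀ x ∈ Z \ Y, x ∉ Y ∧
          ¬ ((insert x Y).card ≤ r ∧ ∀ i, ((insert x Y) ∩ H i).card ≤ rr i) := by
        intro x hx
        rcases Finset.mem_sdiff.mp hx with ⟨hxZ, hxY⟩
        refine ⟨hxY, ?_⟩
        intro hind
        have hmem : insert x Y ∈ s := Finset.mem_filter.mpr
          ⟨Finset.mem_powerset.mpr (Finset.insert_subset hxZ hYZ), (hMind _).mpr hind⟩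
        have hle : (insert x Y).card ≤ Y.card := by
          rw [← hYsup]
          exact Finset.le_sup hmem
        have : (insert x Y).card = Y.card + 1 := Finset.card_insert_of_notMem hxY
        omega
      obtain ⟨i0, hcov, htight⟩ := key Y (Z \ Y) hYIi hr hne hblk
      · have hsub : Z \ H i0 ⊆ Y \ H i0 := by
          intro x hx
          rcases Finset.mem_sdiff.mp hx with ⟨hxZ, hxH⟩
          refine Finset.mem_sdiff.mpr ⟨?_, hxH⟩
          by_contra hxY
          exact hxH (hcov (Finset.mem_sdiff.mpr ⟨hxZ, hxY⟩))
        have c1 := Finset.card_le_card hsub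
        have c2 : (Y \ H i0).card + (Y ∩ H i0).card = Y.card :=
          Finset.card_sdiff_add_card_inter _ _
        have := hi i0
        omega
    rw [hrank]
    refine le_antisymm (le_min ?_ (le_min ?_ ?_)) ?_
    · exact_mod_cast hYIr
    · exact_mod_cast Finset.card_le_card hYZ
    · refine le_iInf fun i => ?_
      have hle : Y.card ≤ (Z \ H i).card + rr i := by
        have c2 : (Y \ H i).card + (Y ∩ H i).card = Y.card :=
          Finset.card_sdiff_add_card_inter _ _
        have c3 : (Y \ H i).card ≤ (Z \ H i).card :=
          Finset.card_le_card (Finset.sdiff_subset_sdiff hYZ Finset.Subset.rfl)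
        have := hYIi i
        omega
      exact_mod_cast hle
    · by_contra hlt
      push_neg at hlt
      rw [lt_min_iff, lt_min_iff] at hlt
      obtain ⟨l1, l2, l3⟩ := hlt
      refine main ⟨?_, ?_, fun i => ?_⟩
      · exact_mod_cast l1
      · exact_mod_cast l2
      · have : (Y.card : ℕ∞) < (((Z \ H i).card + rr i : ℕ) : ℕ∞) :=
          lt_of_lt_of_le l3 (iInf_le _ i)
        exact_mod_cast this
  -- rank of the ground set
  have hruniv : M.rank Finset.univ = r := by
    have hf := formula Finset.univ
    have hmin : min (r : ℕ∞) (min (((Finset.univ : Finset α).card : ℕ∞))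
        (⨅ i : Fin q, ((((Finset.univ : Finset α) \ H i).card + rr i : ℕ) : ℕ∞))) = (r : ℕ∞) := by
      refine min_eq_left (le_min ?_ ?_)
      · rw [Finset.card_univ]
        exact_mod_cast hcard
      · refine le_iInf fun i => ?_
        exact_mod_cast h2 i
    rw [hmin] at hf
    exact_mod_cast hf
  exact ⟨M, hMind, hruniv, formula⟩
end

section
/- Let M1 = (E,𝓘1) be an elementary split matroid and let M2 = (E,𝓘2) be an arbitrary matroid on E, let w : E → ℝ, let k ∈ ℕ, and let I be w-maximal in 𝓘1^k ∩ 𝓘2^k. If 𝓘1^{k+1} ∩ 𝓘2^{k+1} ≠ ∅, then there exists a shortest cheapest S_I–T_I path in D'[I] of length at most 3; that is, there is an S_I–T_I path P in D'[I] with |P| ≤ 3 such that c(P) ≤ c(Q) for every S_I–T_I path Q in D'[I]. -/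
open Classical Finset

def A1 {α : Type} (M1 : FinMatroid α) (I : Finset α) (a b : α) : Prop :=
  a ∈ I ∧ b ∉ I ∧ M1.Indep (insert b (I.erase a))

def A2 {α : Type} (M2 : FinMatroid α) (I : Finset α) (a b : α) : Prop :=
  a ∉ I ∧ b ∈ I ∧ M2.Indep (insert a (I.erase b))

def DArcs {α : Type} (M1 M2 : FinMatroid α) (I : Finset α) (a b : α) : Prop :=
  A1 M1 I a b ∨ A2 M2 I a b

def inS {α : Type} (M1 : FinMatroid α) (I : Finset α) (s : α) : Prop :=
  s ∉ I ∧ M1.Indep (insert s I)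

def inT {α : Type} (M2 : FinMatroid α) (I : Finset α) (t : α) : Prop :=
  t ∉ I ∧ M2.Indep (insert t I)

def A1' {α : Type} (M1 : FinMatroid α) (I : Finset α) (a b : α) : Prop :=
  A1 M1 I a b ∧ ¬ inS M1 I b

def A2' {α : Type} (M2 : FinMatroid α) (I : Finset α) (a b : α) : Prop :=
  A2 M2 I a b ∧ ¬ inT M2 I a

def DArcs' {α : Type} (M1 M2 : FinMatroid α) (I : Finset α) (a b : α) : Prop :=
  A1' M1 I a b ∨ A2' M2 I a b

def IsCycle {α : Type} (A : α → α → Prop) (P : List α) : Prop :=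
  ∃ h : P ≠ [], P.Nodup ∧ P.Chain' A ∧ A (P.getLast h) (P.head h)

def IsPathFromTo {α : Type} (A : α → α → Prop) (S T : α → Prop) (P : List α) : Prop :=
  ∃ h : P ≠ [], P.Nodup ∧ P.Chain' A ∧ S (P.head h) ∧ T (P.getLast h)

def IsPathBtw {α : Type} (A : α → α → Prop) (s e : α) (P : List α) : Prop :=
  ∃ h : P ≠ [], P.Nodup ∧ P.Chain' A ∧ P.head h = s ∧ P.getLast h = e

noncomputable def cost {α : Type} (w : α → ℝ) (I : Finset α) (e : α) : ℝ :=
  if e ∈ I then w e else -w e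

noncomputable def costOf {α : Type} (w : α → ℝ) (I : Finset α) (P : List α) : ℝ :=
  (P.map (cost w I)).sum

noncomputable def symmd {α : Type} (A B : Finset α) : Finset α := (A \ B) ∪ (B \ A)

lemma matroid_grow {α : Type} (M : FinMatroid α) (B : Finset α) (hB : M.Indep B) :
    ∀ (n : ℕ) (A : Finset α), M.Indep A → A.card + n = B.card →
      ∃ A', A ⊆ A' ∧ A' ⊆ A ∪ B ∧ M.Indep A' ∧ A'.card = B.card := by
  intro n
  induction n with
  | zero => exact fun A hA hc => ⟨A, subset_rfl, subset_union_left, hA, by omega⟩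
  | succ n ih =>
    intro A hA hc
    obtain ⟨x, hx, hxi⟩ := M.exchange hA hB (by omega)
    simp only [Finset.mem_sdiff] at hx
    obtain ⟨A', h1, h2, h3, h4⟩ := ih (insert x A) hxi
      (by rw [Finset.card_insert_of_notMem hx.2]; omega)
    refine ⟨A', (Finset.subset_insert _ _).trans h1, h2.trans ?_, h3, h4⟩
    intro z hz
    rcases Finset.mem_union.1 hz with h | h
    · rcases Finset.mem_insert.1 h with rfl | h
      · exact Finset.mem_union_right _ hx.1
      · exact Finset.mem_union_left _ h
    · exact Finset.mem_union_right _ h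

/-- (Claim 3, Section 5.2.) Let `M1` be an elementary split matroid, `M2` arbitrary,
and `I` a `w`-maximal set in `𝓘1^k ∩ 𝓘2^k`. If `𝓘1^{k+1} ∩ 𝓘2^{k+1} ≠ ∅`, then
there is a shortest cheapest `S_I`–`T_I` path in `D'[I]` of length at most `3`:
an `S_I`–`T_I` path `P` with `|P| ≤ 3` whose cost is at most that of every
`S_I`–`T_I` path in `D'[I]`. -/
theorem stmt_17 {α : Type} [Fintype α] (q r : ℕ) (H : Fin q → Finset α)
    (rr : Fin q → ℕ)
    (hcard : r ≤ Fintype.card α)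
    (h1 : ∀ i j : Fin q, i < j → (H i ∩ H j).card + r ≤ rr i + rr j)
    (h2 : ∀ i : Fin q, r ≤ (Finset.univ \ H i).card + rr i)
    (M1 M2 : FinMatroid α)
    (hM1 : ∀ X : Finset α, M1.Indep X ↔ X.card ≤ r ∧ ∀ i, (X ∩ H i).card ≤ rr i)
    (w : α → ℝ) (k : ℕ) (I : Finset α)
    (hI1 : M1.Indep I) (hI2 : M2.Indep I) (hIk : I.card = k)
    (hmax : ∀ J : Finset α, M1.Indep J → M2.Indep J → J.card = k → J.sum w ≤ I.sum w)
    (hne : ∃ J : Finset α, M1.Indep J ∧ M2.Indep J ∧ J.card = k + 1) :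
    ∃ P : List α, IsPathFromTo (DArcs' M1 M2 I) (inS M1 I) (inT M2 I) P ∧
      P.length ≤ 3 ∧
      ∀ Q, IsPathFromTo (DArcs' M1 M2 I) (inS M1 I) (inT M2 I) Q →
        costOf w I P ≤ costOf w I Q := by
  
  obtain ⟨J, hJ1, hJ2, hJk⟩ := hne
  have hJr := (hM1 J).1 hJ1
  have hkr : k + 1 ≤ r := hJk ▸ hJr.1
  have hIH : ∀ i, (I ∩ H i).card ≤ rr i := ((hM1 I).1 hI1).2
  set Tgt : Fin q → Prop := fun i => (I ∩ H i).card = rr i with hTgtdef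
  -- uniqueness of tight index
  have htu : ∀ i j, Tgt i → Tgt j → i = j := by
    have key : ∀ i j : Fin q, i < j → Tgt i → Tgt j → False := by
      intro i j hij hi hj
      have e1 : ((I ∩ H i) ∪ (I ∩ H j)).card + ((I ∩ H i) ∩ (I ∩ H j)).card
          = (I ∩ H i).card + (I ∩ H j).card := Finset.card_union_add_card_inter _ _
      have e2 : ((I ∩ H i) ∪ (I ∩ H j)).card ≤ k := by
        rw [← hIk]
        refine Finset.card_le_card ?_
        intro z hz
        rcases Finset.mem_union.1 hz with h | h <;> exact (Finset.mem_inter.1 h).1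
      have e3 : ((I ∩ H i) ∩ (I ∩ H j)).card ≤ (H i ∩ H j).card := by
        refine Finset.card_le_card ?_
        intro z hz
        simp only [Finset.mem_inter] at hz ⊢
        exact ⟨hz.1.2, hz.2.2⟩
      have e4 := h1 i j hij
      have hi' : (I ∩ H i).card = rr i := hi
      have hj' : (I ∩ H j).card = rr j := hj
      omega
    intro i j hi hj
    by_contra hne'
    rcases lt_or_gt_of_ne hne' with h | h
    · exact key i j h hi hj
    · exact key j i h hj hi
  -- membership in S from no tight hyperplane
  have hSin1 : ∀ x, x ∉ I → (∀ i, x ∈ H i → ¬ Tgt i) → inS M1 I x := by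
    intro x hxI hx
    refine ⟨hxI, (hM1 _).2 ⟨?_, ?_⟩⟩
    · rw [Finset.card_insert_of_notMem hxI, hIk]; exact hkr
    · intro i
      by_cases hxi : x ∈ H i
      · have hsub : insert x I ∩ H i ⊆ insert x (I ∩ H i) := by
          intro z hz
          rcases Finset.mem_inter.1 hz with ⟨hz1, hz2⟩
          rcases Finset.mem_insert.1 hz1 with rfl | hz1
          · exact Finset.mem_insert_self _ _
          · exact Finset.mem_insert_of_mem (Finset.mem_inter.2 ⟨hz1, hz2⟩)
        have hlt : (I ∩ H i).card < rr i := lt_of_le_of_ne (hIH i) (hx i hxi)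
        calc (insert x I ∩ H i).card ≤ (insert x (I ∩ H i)).card := Finset.card_le_card hsub
          _ ≤ (I ∩ H i).card + 1 := Finset.card_insert_le _ _
          _ ≤ rr i := hlt
      · have hsub : insert x I ∩ H i ⊆ I ∩ H i := by
          intro z hz
          rcases Finset.mem_inter.1 hz with ⟨hz1, hz2⟩
          rcases Finset.mem_insert.1 hz1 with rfl | hz1
          · exact absurd hz2 hxi
          · exact Finset.mem_inter.2 ⟨hz1, hz2⟩
        exact le_trans (Finset.card_le_card hsub) (hIH i)
  have hSin2 : ∀ x, x ∉ I → ¬ inS M1 I x → ∃ i, x ∈ H i ∧ Tgt i := by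
    intro x hxI hx
    by_contra hc
    push_neg at hc
    exact hx (hSin1 x hxI hc)
  -- x in a tight hyperplane is not in S
  have hNotS : ∀ i, Tgt i → ∀ x, x ∈ H i → x ∉ I → ¬ inS M1 I x := by
    intro i hi x hxH hxI hS
    have hind := (hM1 _).1 hS.2
    have hsub : insert x (I ∩ H i) ⊆ insert x I ∩ H i := by
      intro z hz
      rcases Finset.mem_insert.1 hz with rfl | hz
      · exact Finset.mem_inter.2 ⟨Finset.mem_insert_self _ _, hxH⟩
      · exact Finset.mem_inter.2 ⟨Finset.mem_insert_of_mem (Finset.mem_inter.1 hz).1,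
          (Finset.mem_inter.1 hz).2⟩
    have hxIH : x ∉ I ∩ H i := fun h => hxI (Finset.mem_inter.1 h).1
    have hcard : rr i + 1 ≤ (insert x I ∩ H i).card := by
      have := Finset.card_le_card hsub
      rw [Finset.card_insert_of_notMem hxIH] at this
      have hi' : (I ∩ H i).card = rr i := hi
      omega
    have := hind.2 i
    omega
  -- the single-swap independence in M1
  have hSwapM1 : ∀ i₀, Tgt i₀ → ∀ y, y ∈ I → y ∈ H i₀ → ∀ x, x ∉ I → x ∈ H i₀ →
      M1.Indep (insert x (I.erase y)) := by
    intro i₀ hi₀ y hyI hyH x hxI hxH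
    have hk1 : 1 ≤ k := by
      rw [← hIk]; exact Finset.card_pos.2 ⟨y, hyI⟩
    refine (hM1 _).2 ⟨?_, ?_⟩
    · calc (insert x (I.erase y)).card ≤ (I.erase y).card + 1 := Finset.card_insert_le _ _
        _ = k := by rw [Finset.card_erase_of_mem hyI, hIk]; omega
        _ ≤ r := by omega
    · intro i
      have hsub : insert x (I.erase y) ∩ H i ⊆ insert x ((I ∩ H i).erase y) := by
        intro z hz
        rcases Finset.mem_inter.1 hz with ⟨hz1, hz2⟩
        rcases Finset.mem_insert.1 hz1 with rfl | hz1
        · exact Finset.mem_insert_self _ _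
        · rcases Finset.mem_erase.1 hz1 with ⟨hzy, hzI⟩
          exact Finset.mem_insert_of_mem (Finset.mem_erase.2 ⟨hzy, Finset.mem_inter.2 ⟨hzI, hz2⟩⟩)
      have hle : (insert x (I.erase y) ∩ H i).card ≤ ((I ∩ H i).erase y).card + 1 :=
        le_trans (Finset.card_le_card hsub) (Finset.card_insert_le _ _)
      by_cases hii : i = i₀
      · subst hii
        have hyIH : y ∈ I ∩ H i := Finset.mem_inter.2 ⟨hyI, hyH⟩
        have := Finset.card_erase_of_mem hyIH
        have hi' : (I ∩ H i).card = rr i := hi₀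
        have h1k : 1 ≤ (I ∩ H i).card := Finset.card_pos.2 ⟨y, hyIH⟩
        omega
      · have hnt : ¬ Tgt i := fun h => hii (htu i i₀ h hi₀)
        have hlt : (I ∩ H i).card < rr i := lt_of_le_of_ne (hIH i) hnt
        have := Finset.card_erase_le (s := I ∩ H i) (a := y)
        omega
  -- endpoints of A1' arcs lie in the tight hyperplane
  have hA1mem : ∀ i₀, Tgt i₀ → ∀ a b, A1' M1 I a b →
      a ∈ I ∧ a ∈ H i₀ ∧ b ∉ I ∧ b ∈ H i₀ := by
    intro i₀ hi₀ a b hab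
    obtain ⟨⟨haI, hbI, hind⟩, hnS⟩ := hab
    obtain ⟨j, hbj, htj⟩ := hSin2 b hbI hnS
    have hji : j = i₀ := htu j i₀ htj hi₀
    subst hji
    refine ⟨haI, ?_, hbI, hbj⟩
    by_contra haH
    have hind' := (hM1 _).1 hind
    have hsub : insert b (I ∩ H j) ⊆ insert b (I.erase a) ∩ H j := by
      intro z hz
      rcases Finset.mem_insert.1 hz with rfl | hz
      · exact Finset.mem_inter.2 ⟨Finset.mem_insert_self _ _, hbj⟩
      · rcases Finset.mem_inter.1 hz with ⟨hzI, hzH⟩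
        have hza : z ≠ a := fun h => haH (h ▸ hzH)
        exact Finset.mem_inter.2 ⟨Finset.mem_insert_of_mem (Finset.mem_erase.2 ⟨hza, hzI⟩), hzH⟩
    have hbIH : b ∉ I ∩ H j := fun h => hbI (Finset.mem_inter.1 h).1
    have hc1 := Finset.card_le_card hsub
    rw [Finset.card_insert_of_notMem hbIH] at hc1
    have hi' : (I ∩ H j).card = rr j := htj
    have := hind'.2 j
    omega
  -- arc typing
  have hArcA1 : ∀ a b, DArcs' M1 M2 I a b → b ∉ I → A1' M1 I a b := by
    intro a b hab hbI
    rcases hab with h | h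
    · exact h
    · exact absurd h.1.2.1 hbI
  have hArcA2 : ∀ a b, DArcs' M1 M2 I a b → b ∈ I → A2' M2 I a b := by
    intro a b hab hbI
    rcases hab with h | h
    · exact absurd hbI h.1.2.1
    · exact h
  -- T is nonempty
  obtain ⟨t₀, ht₀m, ht₀i⟩ := M2.exchange hI2 hJ2 (by omega)
  have ht₀I : t₀ ∉ I := (Finset.mem_sdiff.1 ht₀m).2
  have ht₀ : inT M2 I t₀ := ⟨ht₀I, ht₀i⟩
  -- existence of some S-T path
  have hEx : ∃ P, IsPathFromTo (DArcs' M1 M2 I) (inS M1 I) (inT M2 I) P := by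
    by_cases hTight : ∃ i, Tgt i
    · obtain ⟨i₀, hi₀⟩ := hTight
      by_cases hTH : ∀ t, inT M2 I t → t ∈ H i₀
      · -- all of T lies in the tight hyperplane: find a length-3 path
        have harc : ∃ s y, s ∉ I ∧ s ∉ H i₀ ∧ y ∈ I ∧ y ∈ H i₀ ∧
            M2.Indep (insert s (I.erase y)) := by
          by_contra hno
          push_neg at hno
          have hdep : ∀ s, s ∉ I → s ∉ H i₀ → ¬ M2.Indep (insert s (I \ H i₀)) := by
            intro s hsI hsH hind
            have hsT : ¬ inT M2 I s := fun h => hsH (hTH s h)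
            have hIdep : ¬ M2.Indep (insert s I) := fun h => hsT ⟨hsI, h⟩
            have hsIH : s ∉ I \ H i₀ := fun h => hsI (Finset.mem_sdiff.1 h).1
            have hcards : (I ∩ H i₀).card + (I \ H i₀).card = k := by
              rw [Finset.card_inter_add_card_sdiff, hIk]
            by_cases h0 : (I ∩ H i₀).card = 0
            · have : I \ H i₀ = I := by
                ext z
                simp only [Finset.mem_sdiff, and_iff_left_iff_imp]
                intro hzI hzH
                exact absurd (Finset.card_eq_zero.1 h0 ▸ Finset.mem_inter.2 ⟨hzI, hzH⟩)
                  (Finset.notMem_empty z)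
              rw [this] at hind
              exact hIdep hind
            · have hA0 : (insert s (I \ H i₀)).card = (I \ H i₀).card + 1 :=
                Finset.card_insert_of_notMem hsIH
              obtain ⟨A', hsub, hsubU, hind', hcard'⟩ :=
                matroid_grow M2 I hI2 (k - (insert s (I \ H i₀)).card)
                  (insert s (I \ H i₀)) hind (by omega)
              rw [hIk] at hcard'
              have hsA' : s ∈ A' := hsub (Finset.mem_insert_self _ _)
              have hA'sub : A' ⊆ insert s I := by
                refine hsubU.trans ?_
                intro z hz
                rcases Finset.mem_union.1 hz with h | h
                · rcases Finset.mem_insert.1 h with rfl | h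
                  · exact Finset.mem_insert_self _ _
                  · exact Finset.mem_insert_of_mem (Finset.mem_sdiff.1 h).1
                · exact Finset.mem_insert_of_mem h
              have hyex : ∃ y ∈ I, y ∉ A' := by
                by_contra hcon
                push_neg at hcon
                have : insert s I ⊆ A' := by
                  intro z hz
                  rcases Finset.mem_insert.1 hz with rfl | hz
                  · exact hsA'
                  · exact hcon z hz
                have := Finset.card_le_card this
                rw [Finset.card_insert_of_notMem hsI, hIk] at this
                omega
              obtain ⟨y, hyI, hyA⟩ := hyex
              have hyH : y ∈ H i₀ := by
                by_contra hyH
                exact hyA (hsub (Finset.mem_insert_of_mem (Finset.mem_sdiff.2 ⟨hyI, hyH⟩)))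
              have hA'eq : A' = insert s (I.erase y) := by
                apply Finset.eq_of_subset_of_card_le
                · intro z hz
                  rcases Finset.mem_insert.1 (hA'sub hz) with rfl | hzI
                  · exact Finset.mem_insert_self _ _
                  · have hzy : z ≠ y := fun h => hyA (h ▸ hz)
                    exact Finset.mem_insert_of_mem (Finset.mem_erase.2 ⟨hzy, hzI⟩)
                · have h1 : y ∈ I := hyI
                  have : s ∉ I.erase y := fun h => hsI (Finset.mem_erase.1 h).2
                  rw [Finset.card_insert_of_notMem this, Finset.card_erase_of_mem hyI, hIk,
                    hcard']
                  omega
              exact hno s y hsI hsH hyI hyH (hA'eq ▸ hind')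
          -- final contradiction with J
          have hJH : (J ∩ H i₀).card ≤ rr i₀ := hJr.2 i₀
          have hDind : M2.Indep (J \ H i₀) := M2.subset_indep hJ2 (Finset.sdiff_subset)
          have hBind : M2.Indep (I \ H i₀) := M2.subset_indep hI2 (Finset.sdiff_subset)
          have hcI' : (I ∩ H i₀).card + (I \ H i₀).card = k := by
            rw [Finset.card_inter_add_card_sdiff, hIk]
          have hcJ' : (J ∩ H i₀).card + (J \ H i₀).card = k + 1 := by
            rw [Finset.card_inter_add_card_sdiff, hJk]
          have hi₀' : (I ∩ H i₀).card = rr i₀ := hi₀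
          obtain ⟨x, hx, hxind⟩ := M2.exchange hBind hDind (by omega)
          rcases Finset.mem_sdiff.1 hx with ⟨hxJH, hxIH⟩
          rcases Finset.mem_sdiff.1 hxJH with ⟨hxJ, hxH⟩
          have hxI : x ∉ I := fun h => hxIH (Finset.mem_sdiff.2 ⟨h, hxH⟩)
          exact hdep x hxI hxH hxind
        obtain ⟨s, y, hsI, hsH, hyI, hyH, hind2⟩ := harc
        have htH : t₀ ∈ H i₀ := hTH t₀ ht₀
        have hsS : inS M1 I s := by
          refine hSin1 s hsI ?_
          intro i hi hti
          exact hsH ((htu i i₀ hti hi₀) ▸ hi)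
        have hsT : ¬ inT M2 I s := fun h => hsH (hTH s h)
        have harc1 : DArcs' M1 M2 I s y := Or.inr ⟨⟨hsI, hyI, hind2⟩, hsT⟩
        have harc2 : DArcs' M1 M2 I y t₀ :=
          Or.inl ⟨⟨hyI, ht₀I, hSwapM1 i₀ hi₀ y hyI hyH t₀ ht₀I htH⟩,
            hNotS i₀ hi₀ t₀ htH ht₀I⟩
        refine ⟨[s, y, t₀], ⟨by simp, ?_, ?_, ?_, ?_⟩⟩
        · have h1 : s ≠ y := fun h => hsI (h ▸ hyI)
          have h2 : y ≠ t₀ := fun h => ht₀I (h ▸ hyI)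
          have h3 : s ≠ t₀ := fun h => hsH (h ▸ htH)
          simp [h1, h2, h3]
        · simp [List.Chain', List.isChain_cons_cons, harc1, harc2]
        · simpa using hsS
        · simpa using ht₀
      · push_neg at hTH
        obtain ⟨t, htT, htH⟩ := hTH
        have htS : inS M1 I t := by
          refine hSin1 t htT.1 ?_
          intro i hi hti
          exact htH ((htu i i₀ hti hi₀) ▸ hi)
        refine ⟨[t], ⟨by simp, by simp, List.isChain_singleton _, by simpa using htS, by simpa using htT⟩⟩
    · push_neg at hTight
      have htS : inS M1 I t₀ := hSin1 t₀ ht₀I (fun i _ => hTight i)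
      refine ⟨[t₀], ⟨by simp, by simp, List.isChain_singleton _, by simpa using htS, by simpa using ht₀⟩⟩
  -- select a cheapest, then shortest, S-T path
  obtain ⟨P₀, hP₀⟩ := hEx
  have hP₀nd : P₀.Nodup := hP₀.choose_spec.1
  let Pth : {l : List α // l.Nodup} → Prop :=
    fun l => IsPathFromTo (DArcs' M1 M2 I) (inS M1 I) (inT M2 I) l.1
  let PP : Finset {l : List α // l.Nodup} := Finset.univ.filter Pth
  have hPPne : PP.Nonempty := ⟨⟨P₀, hP₀nd⟩, Finset.mem_filter.2 ⟨Finset.mem_univ _, hP₀⟩⟩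
  obtain ⟨Pc, hPc, hPcmin⟩ := Finset.exists_min_image PP (fun l => costOf w I l.1) hPPne
  let QQ : Finset {l : List α // l.Nodup} :=
    PP.filter (fun l => costOf w I l.1 = costOf w I Pc.1)
  have hQQne : QQ.Nonempty := ⟨Pc, Finset.mem_filter.2 ⟨hPc, rfl⟩⟩
  obtain ⟨Pm, hPm, hPmmin⟩ := Finset.exists_min_image QQ (fun l => l.1.length) hQQne
  have hPm' := Finset.mem_filter.1 hPm
  have hPmPath : IsPathFromTo (DArcs' M1 M2 I) (inS M1 I) (inT M2 I) Pm.1 :=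
    (Finset.mem_filter.1 hPm'.1).2
  have hPmcost : costOf w I Pm.1 = costOf w I Pc.1 := hPm'.2
  have hmincost : ∀ Q, IsPathFromTo (DArcs' M1 M2 I) (inS M1 I) (inT M2 I) Q →
      costOf w I Pm.1 ≤ costOf w I Q := by
    intro Q hQ
    have hQnd : Q.Nodup := hQ.choose_spec.1
    rw [hPmcost]
    exact hPcmin ⟨Q, hQnd⟩ (Finset.mem_filter.2 ⟨Finset.mem_univ _, hQ⟩)
  refine ⟨Pm.1, hPmPath, ?_, hmincost⟩
  -- show the selected path has length at most 3
  by_contra hlen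
  push_neg at hlen
  obtain ⟨pre, a, b, c, d, hPdec⟩ : ∃ pre a b c d, Pm.1 = pre ++ [a, b, c, d] := by
    have hlen4 : 4 ≤ Pm.1.reverse.length := by
      rw [List.length_reverse]; omega
    rcases hrev : Pm.1.reverse with _ | ⟨d, _ | ⟨c, _ | ⟨b, _ | ⟨a, rest⟩⟩⟩⟩ <;>
      rw [hrev] at hlen4 <;> simp at hlen4
    refine ⟨rest.reverse, a, b, c, d, ?_⟩
    have := congrArg List.reverse hrev
    rw [List.reverse_reverse] at this
    rw [this]
    simp
  obtain ⟨hne', hnd, hch, hhead, hlast⟩ := hPmPath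
  -- the last vertex is d
  have hlast? : Pm.1.getLast? = some d := by
    rw [hPdec]
    have : pre ++ [a, b, c, d] = (pre ++ [a, b, c]) ++ [d] := by simp
    rw [this, List.getLast?_concat]
  have hlastd : Pm.1.getLast hne' = d := by
    rw [List.getLast?_eq_getLast hne'] at hlast?
    exact Option.some_injective _ hlast?
  have hdT : inT M2 I d := hlastd ▸ hlast
  have hdI : d ∉ I := hdT.1
  -- chain facts
  have hch2 := hch
  rw [hPdec, List.Chain', List.isChain_append] at hch2
  obtain ⟨hchpre, hch4, hjoin⟩ := hch2
  have harc_ab : DArcs' M1 M2 I a b := (List.isChain_cons_cons.1 hch4).1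
  have harc_bc : DArcs' M1 M2 I b c := (List.isChain_cons_cons.1 (List.isChain_cons_cons.1 hch4).2).1
  have harc_cd : DArcs' M1 M2 I c d :=
    (List.isChain_cons_cons.1 (List.isChain_cons_cons.1 (List.isChain_cons_cons.1 hch4).2).2).1
  have hA1cd : A1' M1 I c d := hArcA1 c d harc_cd hdI
  have hcI : c ∈ I := hA1cd.1.1
  obtain ⟨i₀, hdH, hi₀⟩ := hSin2 d hdI hA1cd.2
  obtain ⟨_, hcH, _, _⟩ := hA1mem i₀ hi₀ c d hA1cd
  have hA2bc : A2' M2 I b c := hArcA2 b c harc_bc hcI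
  have hbI : b ∉ I := hA2bc.1.1
  have hA1ab : A1' M1 I a b := hArcA1 a b harc_ab hbI
  obtain ⟨haI, haH, _, hbH⟩ := hA1mem i₀ hi₀ a b hA1ab
  -- the swap gives w b ≤ w c
  have hswap1 : M1.Indep (insert b (I.erase c)) := hSwapM1 i₀ hi₀ c hcI hcH b hbI hbH
  have hswap2 : M2.Indep (insert b (I.erase c)) := hA2bc.1.2.2
  have hbe : b ∉ I.erase c := fun h => hbI (Finset.mem_erase.1 h).2
  have hk1 : 1 ≤ k := by rw [← hIk]; exact Finset.card_pos.2 ⟨c, hcI⟩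
  have hcardsw : (insert b (I.erase c)).card = k := by
    rw [Finset.card_insert_of_notMem hbe, Finset.card_erase_of_mem hcI, hIk]
    omega
  have hwsum := hmax _ hswap1 hswap2 hcardsw
  have hsum1 : (insert b (I.erase c)).sum w = w b + (I.erase c).sum w :=
    Finset.sum_insert hbe
  have hsum2 : (I.erase c).sum w = I.sum w - w c := Finset.sum_erase_eq_sub hcI
  have hwbc : w b ≤ w c := by
    rw [hsum1, hsum2] at hwsum
    linarith
  -- the shortcut path
  have harc_ad : DArcs' M1 M2 I a d :=
    Or.inl ⟨⟨haI, hdI, hSwapM1 i₀ hi₀ a haI haH d hdI hdH⟩, hA1cd.2⟩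
  have hsubl : (pre ++ [a, d]).Sublist (pre ++ [a, b, c, d]) := by
    refine List.Sublist.append_left ?_ pre
    exact List.Sublist.cons₂ _ (((List.Sublist.refl [d]).cons _).cons _)
  have hnd' : (pre ++ [a, d]).Nodup := hsubl.nodup (hPdec ▸ hnd)
  have hch' : (pre ++ [a, d]).Chain' (DArcs' M1 M2 I) := by
    rw [List.Chain', List.isChain_append]
    refine ⟨hchpre, ?_, ?_⟩
    · simp [List.isChain_cons_cons, harc_ad]
    · intro x hx y hy
      simp only [List.head?_cons, Option.mem_def, Option.some.injEq] at hy
      subst hy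
      exact hjoin x hx a (by simp)
  have hne2 : pre ++ [a, d] ≠ [] := by simp
  have hhead? : (pre ++ [a, d]).head? = Pm.1.head? := by
    rw [hPdec]
    cases pre <;> simp
  have hheadeq : (pre ++ [a, d]).head hne2 = Pm.1.head hne' := by
    have h1 := List.head?_eq_head (l := pre ++ [a, d]) hne2
    have h2 := List.head?_eq_head (l := Pm.1) hne'
    rw [h1, h2] at hhead?
    exact Option.some_injective _ hhead?
  have hlast2 : (pre ++ [a, d]).getLast hne2 = d := by
    have h? : (pre ++ [a, d]).getLast? = some d := by
      have : pre ++ [a, d] = (pre ++ [a]) ++ [d] := by simp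
      rw [this, List.getLast?_concat]
    rw [List.getLast?_eq_getLast hne2] at h?
    exact Option.some_injective _ h?
  have hpath' : IsPathFromTo (DArcs' M1 M2 I) (inS M1 I) (inT M2 I) (pre ++ [a, d]) :=
    ⟨hne2, hnd', hch', by rw [hheadeq]; exact hhead, by rw [hlast2]; exact hdT⟩
  -- cost comparison
  have hcost : costOf w I (pre ++ [a, d]) ≤ costOf w I Pm.1 := by
    rw [hPdec]
    simp only [costOf, List.map_append, List.sum_append, List.map_cons, List.map_nil,
      List.sum_cons, List.sum_nil]
    have hcb : cost w I b = -w b := by simp [cost, hbI]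
    have hcc : cost w I c = w c := by simp [cost, hcI]
    rw [hcb, hcc]
    linarith
  have hge : costOf w I Pm.1 ≤ costOf w I (pre ++ [a, d]) := hmincost _ hpath'
  have heq : costOf w I (pre ++ [a, d]) = costOf w I Pc.1 := by
    rw [← hPmcost]; linarith
  have hmemQQ : (⟨pre ++ [a, d], hnd'⟩ : {l : List α // l.Nodup}) ∈ QQ :=
    Finset.mem_filter.2 ⟨Finset.mem_filter.2 ⟨Finset.mem_univ _, hpath'⟩, heq⟩
  have hlenle := hPmmin _ hmemQQ
  simp only [hPdec] at hlenle
  simp at hlenle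
end

section
/- Let M1 = (E,𝓘1) be a partition matroid with all-one upper bounds and let M2 = (E,𝓘2) be an arbitrary matroid on E. Let I ∈ 𝓘1∩𝓘2, let s ∈ S_I\T_I, let y' ∈ I, and let P be a shortest s–y' path in D'[I] such that I △ V(P) ∈ 𝓘1∩𝓘2. Let x ∈ E\I with x ∉ P. Then the following are equivalent: (i) (y',x) ∈ A'1[I] and x ∈ T_I; (ii) {y',x} ∉ 𝓘1∩𝓘2 and I △ (V(P) ∪ {x}) ∈ 𝓘1∩𝓘2. -/
open Classical Finset

/-! ### Auxiliary lemmas -/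

lemma exists_succ {α : Type} {A : α → α → Prop} :
    ∀ (P : List α) (h : P ≠ []), P.Chain' A → ∀ u ∈ P, u = P.getLast h ∨ ∃ v ∈ P, A u v := by
  intro P
  induction P with
  | nil => intro h; exact absurd rfl h
  | cons a t ih =>
    intro h hc u hu
    cases t with
    | nil => simp at hu; subst hu; left; simp
    | cons b t' =>
      simp only [List.Chain', List.isChain_cons_cons] at hc
      rcases List.mem_cons.1 hu with rfl | hu'
      · exact Or.inr ⟨b, by simp, hc.1⟩
      · rcases ih (by simp) hc.2 u hu' with h1 | ⟨v, hv, hav⟩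
        · left; rw [List.getLast_cons (by simp)]; exact h1
        · exact Or.inr ⟨v, List.mem_cons_of_mem _ hv, hav⟩

lemma exists_pred {α : Type} {A : α → α → Prop} :
    ∀ (P : List α) (h : P ≠ []), P.Nodup → P.Chain' A → ∀ u ∈ P,
      u = P.head h ∨ ∃ z ∈ P, A z u ∧ z ≠ P.getLast h := by
  intro P
  induction P with
  | nil => intro h; exact absurd rfl h
  | cons a t ih =>
    intro h hnd hc u hu
    cases t with
    | nil => simp at hu; subst hu; left; simp
    | cons b t' =>
      simp only [List.Chain', List.isChain_cons_cons] at hc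
      rcases List.mem_cons.1 hu with rfl | hu'
      · left; simp
      · right
        have hlast : (a :: b :: t').getLast h = (b :: t').getLast (by simp) :=
          List.getLast_cons (by simp)
        have hane : a ≠ (a :: b :: t').getLast h := by
          rw [hlast]
          intro hco
          exact (List.nodup_cons.1 hnd).1 (hco ▸ List.getLast_mem (by simp))
        rcases ih (by simp) (List.nodup_cons.1 hnd).2 hc.2 u hu' with h1 | ⟨z, hz, haz, hzne⟩
        · rw [List.head_cons] at h1; subst h1
          exact ⟨a, by simp, hc.1, hane⟩
        · exact ⟨z, List.mem_cons_of_mem _ hz, haz, by rw [hlast]; exact hzne⟩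

lemma span_card {α : Type} (M : FinMatroid α) {I K : Finset α}
    (hI : M.Indep I) (hK : M.Indep K)
    (h : ∀ e ∈ K, e ∉ I → ¬ M.Indep (insert e I)) : K.card ≤ I.card := by
  by_contra hlt
  push_neg at hlt
  obtain ⟨e, he, hind⟩ := M.exchange hI hK hlt
  rw [Finset.mem_sdiff] at he
  exact h e he.1 he.2 hind

lemma augment_to {α : Type} (M : FinMatroid α) :
    ∀ (n : ℕ) (I K : Finset α), M.Indep I → M.Indep K → I.card + n = K.card →
      ∃ W : Finset α, I ⊆ W ∧ W ⊆ I ∪ K ∧ W.card = K.card ∧ M.Indep W := by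
  intro n
  induction n with
  | zero =>
    intro I K hI _ hcard
    exact ⟨I, subset_rfl, Finset.subset_union_left, by omega, hI⟩
  | succ m ih =>
    intro I K hI hK hcard
    obtain ⟨e, he, hind⟩ := M.exchange hI hK (by omega)
    rw [Finset.mem_sdiff] at he
    obtain ⟨W, hIW, hWU, hWc, hWi⟩ := ih (insert e I) K hind hK
      (by rw [Finset.card_insert_of_notMem he.2]; omega)
    refine ⟨W, subset_trans (Finset.subset_insert _ _) hIW, ?_, hWc, hWi⟩
    intro a ha
    rcases Finset.mem_union.1 (hWU ha) with h1 | h1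
    · rcases Finset.mem_insert.1 h1 with rfl | h1
      · exact Finset.mem_union_right _ he.1
      · exact Finset.mem_union_left _ h1
    · exact Finset.mem_union_right _ h1

lemma alt_count {α : Type} [DecidableEq α] (I : Finset α) {A : α → α → Prop}
    (halt : ∀ a b, A a b → (a ∈ I ↔ b ∉ I)) :
    ∀ (P : List α) (h : P ≠ []), P.Chain' A →
      ((P.head h ∉ I →
        ((P.getLast h ∈ I → P.countP (fun a => a ∈ I) = P.countP (fun a => a ∉ I)) ∧
         (P.getLast h ∉ I → P.countP (fun a => a ∉ I) = P.countP (fun a => a ∈ I) + 1))) ∧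
       (P.head h ∈ I →
        ((P.getLast h ∈ I → P.countP (fun a => a ∈ I) = P.countP (fun a => a ∉ I) + 1) ∧
         (P.getLast h ∉ I → P.countP (fun a => a ∈ I) = P.countP (fun a => a ∉ I))))) := by
  intro P
  induction P with
  | nil => intro h; exact absurd rfl h
  | cons a t ih =>
    intro h hc
    cases t with
    | nil =>
      simp only [List.head_cons, List.getLast_singleton, List.countP_cons, List.countP_nil]
      constructor
      · intro ha
        constructor
        · intro ha'; exact absurd ha' ha
        · intro _; simp [ha]
      · intro ha
        constructor
        · intro _; simp [ha]
        · intro ha'; exact absurd ha ha'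
    | cons b t' =>
      simp only [List.Chain', List.isChain_cons_cons] at hc
      have hab := halt a b hc.1
      have ih' := ih (by simp) hc.2
      have hlast : (a :: b :: t').getLast h = (b :: t').getLast (by simp) :=
        List.getLast_cons (by simp)
      rw [List.head_cons, hlast]
      rw [List.head_cons] at ih'
      have hcount1 : (a :: b :: t').countP (fun a => decide (a ∈ I)) =
          (b :: t').countP (fun a => decide (a ∈ I)) + (if a ∈ I then 1 else 0) := by
        rw [List.countP_cons]; simp
      have hcount2 : (a :: b :: t').countP (fun a => decide (a ∉ I)) =
          (b :: t').countP (fun a => decide (a ∉ I)) + (if a ∉ I then 1 else 0) := by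
        rw [List.countP_cons]; simp
      by_cases ha : a ∈ I
      · have hb : b ∉ I := hab.1 ha
        have key := (ih'.1 hb)
        constructor
        · intro h'; exact absurd ha h'
        · intro _
          constructor
          · intro hl
            have := key.1 hl
            simp only [hcount1, hcount2, if_pos ha, if_neg (by simp [ha] : ¬ a ∉ I)]
            omega
          · intro hl
            have := key.2 hl
            simp only [hcount1, hcount2, if_pos ha, if_neg (by simp [ha] : ¬ a ∉ I)]
            omega
      · have hb : b ∈ I := by by_contra hb; exact ha (hab.2 hb)
        have key := (ih'.2 hb)
        constructor
        · intro _
          constructor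
          · intro hl
            have := key.1 hl
            simp only [hcount1, hcount2, if_neg ha, if_pos ha]
            omega
          · intro hl
            have := key.2 hl
            simp only [hcount1, hcount2, if_neg ha, if_pos ha]
            omega
        · intro h'; exact absurd h' ha

lemma alt_card {α : Type} [DecidableEq α] (I : Finset α) {A : α → α → Prop}
    (halt : ∀ a b, A a b → (a ∈ I ↔ b ∉ I))
    (P : List α) (h : P ≠ []) (hnd : P.Nodup) (hch : P.Chain' A)
    (hh : P.head h ∉ I) (hl : P.getLast h ∈ I) :
    (P.toFinset ∩ I).card = (P.toFinset \ I).card := by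
  have h1 := ((alt_count I halt P h hch).1 hh).1 hl
  have e1 : ∀ q : α → Bool, P.countP q = (P.toFinset.filter (q ·)).card := by
    intro q
    rw [List.countP_eq_length_filter, ← List.toFinset_filter,
      List.toFinset_card_of_nodup (hnd.filter _)]
  rw [e1, e1] at h1
  have e2 : P.toFinset ∩ I = P.toFinset.filter (fun a => decide (a ∈ I) = true) := by
    ext a; simp
  have e3 : P.toFinset \ I = P.toFinset.filter (fun a => decide (a ∉ I) = true) := by
    ext a; simp
  rw [e2, e3]
  exact h1

/-- (Claim 5, Section 5.1.) Let `M1` be a partition matroid with all-one upper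
bounds (independent sets pick at most one element of each class of the partition
given by the fibers of `p`), `M2` arbitrary, `I ∈ 𝓘1 ∩ 𝓘2`, `s ∈ S_I \ T_I`,
`y' ∈ I`, and `P` a shortest `s`–`y'` path in `D'[I]` with `I △ V(P) ∈ 𝓘1 ∩ 𝓘2`.
For `x ∈ E \ I` with `x ∉ P`: `(y', x) ∈ A'1[I]` and `x ∈ T_I` iff
`{y', x} ∉ 𝓘1 ∩ 𝓘2` and `I △ (V(P) ∪ {x}) ∈ 𝓘1 ∩ 𝓘2`. -/
theorem stmt_18 {α : Type} [Fintype α] {ι : Type} (M1 M2 : FinMatroid α)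
    (p : α → ι)
    (hM1 : ∀ X : Finset α, M1.Indep X ↔ ∀ a ∈ X, ∀ b ∈ X, p a = p b → a = b)
    (I : Finset α) (hI1 : M1.Indep I) (hI2 : M2.Indep I)
    (s : α) (hsS : inS M1 I s) (hsT : ¬ inT M2 I s)
    (y' : α) (hy' : y' ∈ I) (P : List α)
    (hP : IsPathBtw (DArcs' M1 M2 I) s y' P)
    (hPshort : ∀ Q, IsPathBtw (DArcs' M1 M2 I) s y' Q → P.length ≤ Q.length)
    (hPI : M1.Indep (symmd I P.toFinset) ∧ M2.Indep (symmd I P.toFinset))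
    (x : α) (hx : x ∉ I) (hxP : x ∉ P) :
    (A1' M1 I y' x ∧ inT M2 I x) ↔
      (¬ (M1.Indep {y', x} ∧ M2.Indep {y', x}) ∧
        M1.Indep (symmd I (P.toFinset ∪ {x})) ∧
        M2.Indep (symmd I (P.toFinset ∪ {x}))) := by
  obtain ⟨hne, hnd, hch, hhead, hlast⟩ := hP
  have hJ1 := hPI.1
  have hJ2 := hPI.2
  have hy'P : y' ∈ P := hlast ▸ List.getLast_mem hne
  have hsI : s ∉ I := hsS.1
  have hxy : x ≠ y' := fun h => hx (h ▸ hy')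
  have hIclass : ∀ a ∈ I, ∀ b ∈ I, p a = p b → a = b := (hM1 I).1 hI1
  -- membership in the symmetric difference
  have hJmem : ∀ a, a ∈ symmd I P.toFinset ↔ ((a ∈ I ∧ a ∉ P) ∨ (a ∈ P ∧ a ∉ I)) := by
    intro a
    simp [symmd, Finset.mem_union, Finset.mem_sdiff, List.mem_toFinset]
  have hxJ : x ∉ symmd I P.toFinset := by
    rw [hJmem]; push_neg
    exact ⟨fun h => absurd h hx, fun h => absurd h hxP⟩
  have hyJ : y' ∉ symmd I P.toFinset := by
    rw [hJmem]; push_neg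
    exact ⟨fun _ => hy'P, fun _ => hy'⟩
  -- rewrite the symmetric difference with x
  have hsymm_ins : symmd I (P.toFinset ∪ {x}) = insert x (symmd I P.toFinset) := by
    ext a
    simp only [symmd, Finset.mem_union, Finset.mem_sdiff, Finset.mem_insert,
      Finset.mem_singleton, List.mem_toFinset]
    by_cases hax : a = x
    · subst hax
      simp [hx, hxP]
    · simp only [hax, or_false, iff_self_or]
      tauto
  -- arcs alternate with respect to I
  have harc : ∀ a b, DArcs' M1 M2 I a b → (a ∈ I ↔ b ∉ I) := by
    rintro a b (⟨⟨ha, hb, _⟩, _⟩ | ⟨⟨ha, hb, _⟩, _⟩)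
    · exact ⟨fun _ => hb, fun _ => ha⟩
    · exact ⟨fun h => absurd h ha, fun h => absurd hb h⟩
  -- cardinality of the symmetric difference
  have hJcard : (symmd I P.toFinset).card = I.card := by
    have h1 := alt_card I harc P hne hnd hch (hhead ▸ hsI) (hlast ▸ hy')
    have h2 : (I \ P.toFinset).card + (I ∩ P.toFinset).card = I.card :=
      Finset.card_sdiff_add_card_inter I P.toFinset
    have h3 : I ∩ P.toFinset = P.toFinset ∩ I := Finset.inter_comm _ _
    have hdisj : Disjoint (I \ P.toFinset) (P.toFinset \ I) := by
      apply Finset.disjoint_left.2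
      intro a ha hb
      exact (Finset.mem_sdiff.1 hb).2 (Finset.mem_sdiff.1 ha).1
    rw [h3] at h2
    rw [symmd, Finset.card_union_of_disjoint hdisj]
    omega
  -- every element of P outside I is not in T
  have hnotT : ∀ u ∈ P, u ∉ I → ¬ inT M2 I u := by
    intro u hu huI
    rcases exists_succ P hne hch u hu with h1 | ⟨v, _, harc'⟩
    · exact absurd (h1.trans hlast ▸ hy') huI
    · rcases harc' with ⟨⟨huI', _, _⟩, _⟩ | ⟨_, hnT⟩
      · exact absurd huI' huI
      · exact hnT
  -- partner class for A1 arcs into non-source vertices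
  have hpartner : ∀ z u, A1 M1 I z u → ¬ inS M1 I u → p u = p z := by
    rintro z u ⟨hzI, huI, hins⟩ hnS
    have hnotind : ¬ M1.Indep (insert u I) := fun hh => hnS ⟨huI, hh⟩
    rw [hM1] at hnotind
    push_neg at hnotind
    obtain ⟨a, ha, b, hb, hpab, hab⟩ := hnotind
    have key : ∀ c, c ∈ I → p c = p u → c = z := by
      intro c hc hpc
      by_contra hcz
      have hmem : c ∈ insert u (I.erase z) :=
        Finset.mem_insert_of_mem (Finset.mem_erase.2 ⟨hcz, hc⟩)
      have := (hM1 _).1 hins c hmem u (Finset.mem_insert_self u _) hpc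
      exact huI (this ▸ hc)
    rcases Finset.mem_insert.1 ha with rfl | ha' <;> rcases Finset.mem_insert.1 hb with rfl | hb'
    · exact absurd rfl hab
    · rw [← key b hb' hpab.symm]; exact hpab
    · rw [← key a ha' hpab]; exact hpab.symm
    · exact absurd (hIclass a ha' b hb' hpab) hab
  -- class of s is not represented in I
  have hsclass : ∀ a ∈ I, p s ≠ p a := by
    intro a ha hpa
    have : s ∈ insert s I := Finset.mem_insert_self s I
    have := (hM1 _).1 hsS.2 s this a (Finset.mem_insert_of_mem ha) hpa
    exact hsI (this ▸ ha)
  -- successors of inner I-vertices of P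
  have hsucc1 : ∀ z ∈ P, z ∈ I → z ≠ y' → ∃ v ∈ P, v ∉ I ∧ p v = p z := by
    intro z hz hzI hzy
    rcases exists_succ P hne hch z hz with h1 | ⟨v, hv, harc'⟩
    · exact absurd (h1.trans hlast) hzy
    · rcases harc' with ⟨hA1, hnS⟩ | ⟨⟨hzn, _, _⟩, _⟩
      · exact ⟨v, hv, hA1.2.1, hpartner z v hA1 hnS⟩
      · exact absurd hzI hzn
  -- predecessors of non-s vertices of P outside I
  have hpred1 : ∀ u ∈ P, u ∉ I → u ≠ s → ∃ z ∈ P, z ∈ I ∧ z ≠ y' ∧ p u = p z := by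
    intro u hu huI hus
    rcases exists_pred P hne hnd hch u hu with h1 | ⟨z, hz, harc', hzlast⟩
    · exact absurd (h1.trans hhead) hus
    · rcases harc' with ⟨hA1, hnS⟩ | ⟨⟨_, huI', _⟩, _⟩
      · exact ⟨z, hz, hA1.1, fun h => hzlast (h.trans hlast.symm),
          hpartner z u hA1 hnS⟩
      · exact absurd huI' huI
  -- no element of J shares the class of y'
  have hclassJ : ∀ b ∈ symmd I P.toFinset, p b = p y' → False := by
    intro b hb hpb
    rcases (hJmem b).1 hb with ⟨hbI, hbP⟩ | ⟨hbP, hbI⟩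
    · exact hbP ((hIclass b hbI y' hy' hpb) ▸ hy'P)
    · by_cases hbs : b = s
      · exact hsclass y' hy' (hbs ▸ hpb)
      · obtain ⟨z, _, hzI, hzy, hpz⟩ := hpred1 b hbP hbI hbs
        exact hzy (hIclass z hzI y' hy' (hpz ▸ hpb))
  -- elements of J outside I are spanned by I in M2
  have hJsub : ∀ e ∈ symmd I P.toFinset, e ∉ I → ¬ M2.Indep (insert e I) := by
    intro e he heI hind
    rcases (hJmem e).1 he with ⟨h1, _⟩ | ⟨h1, _⟩
    · exact heI h1
    · exact hnotT e h1 heI ⟨heI, hind⟩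
  -- y' is spanned by J in M2
  have hy'cl : ¬ M2.Indep (insert y' (symmd I P.toFinset)) := by
    intro hind
    have hc : (insert y' (symmd I P.toFinset)).card ≤ I.card := by
      apply span_card M2 hI2 hind
      intro e he heI
      rcases Finset.mem_insert.1 he with rfl | he'
      · exact absurd hy' heI
      · exact hJsub e he' heI
    rw [Finset.card_insert_of_notMem hyJ, hJcard] at hc
    omega
  rw [hsymm_ins]
  constructor
  · -- forward direction
    rintro ⟨⟨hA1yx, hnSx⟩, hTx⟩
    have hpxy : p x = p y' := hpartner y' x hA1yx hnSx
    refine ⟨?_, ?_, ?_⟩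
    · rintro ⟨h1, _⟩
      have := (hM1 _).1 h1 y' (by simp) x (by simp) hpxy.symm
      exact hxy this.symm
    · -- M1 independence of insert x J
      rw [hM1]
      intro a ha b hb hpab
      rcases Finset.mem_insert.1 ha with rfl | ha' <;> rcases Finset.mem_insert.1 hb with rfl | hb'
      · rfl
      · exact absurd (hpxy ▸ hpab.symm) (fun h => hclassJ b hb' h)
      · exact absurd (hpxy ▸ hpab) (fun h => hclassJ a ha' h)
      · exact (hM1 _).1 hJ1 a ha' b hb' hpab
    · -- M2 independence of insert x J
      have hcard : (symmd I P.toFinset).card < (insert x I).card := by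
        rw [Finset.card_insert_of_notMem hx, hJcard]; omega
      obtain ⟨e, he, hind⟩ := M2.exchange hJ2 hTx.2 hcard
      rw [Finset.mem_sdiff] at he
      rcases Finset.mem_insert.1 he.1 with rfl | heI
      · exact hind
      · exfalso
        have hc : (insert e (symmd I P.toFinset)).card ≤ I.card := by
          apply span_card M2 hI2 hind
          intro f hf hfI
          rcases Finset.mem_insert.1 hf with rfl | hf'
          · exact absurd heI hfI
          · exact hJsub f hf' hfI
        rw [Finset.card_insert_of_notMem he.2, hJcard] at hc
        omega
  · -- backward direction
    rintro ⟨hdep, hJx1, hJx2⟩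
    -- x ∈ T_I
    have hTx : inT M2 I x := by
      have hcard : I.card < (insert x (symmd I P.toFinset)).card := by
        rw [Finset.card_insert_of_notMem hxJ, hJcard]; omega
      obtain ⟨e, he, hind⟩ := M2.exchange hI2 hJx2 hcard
      rw [Finset.mem_sdiff] at he
      rcases Finset.mem_insert.1 he.1 with rfl | heJ
      · exact ⟨he.2, hind⟩
      · exfalso
        rcases (hJmem e).1 heJ with ⟨h1, _⟩ | ⟨h1, _⟩
        · exact he.2 h1
        · exact hnotT e h1 he.2 ⟨he.2, hind⟩
    -- {y', x} is independent in M2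
    have hM2yx : M2.Indep {y', x} := by
      by_contra h2
      have h1 : M2.Indep {y'} := M2.subset_indep hI2 (Finset.singleton_subset_iff.2 hy')
      have hcard1 : ({y'} : Finset α).card + I.card = (insert x (symmd I P.toFinset)).card := by
        rw [Finset.card_singleton, Finset.card_insert_of_notMem hxJ, hJcard]; omega
      obtain ⟨W, hyW, hWsub, hWc, hWi⟩ := augment_to M2 I.card {y'} _ h1 hJx2 hcard1
      by_cases hxW : x ∈ W
      · apply h2
        apply M2.subset_indep hWi
        intro a ha
        rcases Finset.mem_insert.1 ha with rfl | ha'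
        · exact hyW (Finset.mem_singleton_self _)
        · exact (Finset.mem_singleton.1 ha') ▸ hxW
      · have hWsub' : W ⊆ insert y' (symmd I P.toFinset) := by
          intro a ha
          rcases Finset.mem_union.1 (hWsub ha) with h1' | h1'
          · exact Finset.mem_insert.2 (Or.inl (Finset.mem_singleton.1 h1'))
          · rcases Finset.mem_insert.1 h1' with rfl | h1''
            · exact absurd ha hxW
            · exact Finset.mem_insert_of_mem h1''
        have hWeq : W = insert y' (symmd I P.toFinset) := by
          apply Finset.eq_of_subset_of_card_le hWsub'
          rw [Finset.card_insert_of_notMem hyJ, hJcard, hWc,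
            Finset.card_insert_of_notMem hxJ, hJcard]
        exact hy'cl (hWeq ▸ hWi)
    -- classes of y' and x coincide
    have hpyx : p y' = p x := by
      have h1' : ¬ M1.Indep {y', x} := fun h => hdep ⟨h, hM2yx⟩
      rw [hM1] at h1'
      push_neg at h1'
      obtain ⟨a, ha, b, hb, hpab, hab⟩ := h1'
      rcases Finset.mem_insert.1 ha with rfl | ha' <;> rcases Finset.mem_insert.1 hb with rfl | hb'
      · exact absurd rfl hab
      · exact (Finset.mem_singleton.1 hb') ▸ hpab
      · exact ((Finset.mem_singleton.1 ha') ▸ hpab).symm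
      · exact absurd ((Finset.mem_singleton.1 ha').trans (Finset.mem_singleton.1 hb').symm) hab
    have hnSx : ¬ inS M1 I x := by
      rintro ⟨_, hind⟩
      have := (hM1 _).1 hind y' (Finset.mem_insert_of_mem hy') x (Finset.mem_insert_self x _) hpyx
      exact hxy this.symm
    refine ⟨⟨⟨hy', hx, ?_⟩, hnSx⟩, hTx⟩
    -- insert x (I.erase y') is independent in M1
    rw [hM1]
    intro a ha b hb hpab
    rcases Finset.mem_insert.1 ha with rfl | ha' <;> rcases Finset.mem_insert.1 hb with rfl | hb'
    · rfl
    · exfalso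
      have hbmem := Finset.mem_erase.1 hb'
      exact hbmem.1 (hIclass b hbmem.2 y' hy' (hpab.symm.trans hpyx.symm))
    · exfalso
      have hamem := Finset.mem_erase.1 ha'
      exact hamem.1 (hIclass a hamem.2 y' hy' (hpab.trans hpyx.symm))
    · exact hIclass a (Finset.mem_erase.1 ha').2 b (Finset.mem_erase.1 hb').2 hpab
end
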